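/- arXiv:2205.01968 — 5 statements merged into one kernel-verified Lean document; each statement's English description precedes it below -/
import Mathlib

section
/- Every f ∈ Q([0,T];Y) has bounded range in Y (i.e. {f(t) : t ∈ [0,T]} is a bounded subset of the topological vector space Y) and is continuous at every point of the form t = Tr with r ∈ [0,1] irrational. In particular, f is continuous at all but at most countably many points of [0,T]. -/
open Filter Topology Set

noncomputable section

/-- The path space `Y^{[0,T]}` equipped with the topology (uniformity) of uniform
convergence. -/
abbrev PathSpace (Y : Type*) [UniformSpace Y] (T : ℝ) : Type _ :=
  UniformFun (Set.Icc (0 : ℝ) T) Y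

/-- `Q_n([0,T];Y)`: functions that are constant on every open interval
`(t_{i-1}^n, t_i^n)` where `t_i^n = i T / n`, `1 ≤ i ≤ n`. -/
def Qn (Y : Type*) [UniformSpace Y] (T : ℝ) (n : ℕ) : Set (PathSpace Y T) :=
  {f | ∀ i : ℕ, 1 ≤ i → i ≤ n → ∀ s t : Set.Icc (0 : ℝ) T,
      ((i : ℝ) - 1) * T / n < (s : ℝ) → (s : ℝ) < (i : ℝ) * T / n →
      ((i : ℝ) - 1) * T / n < (t : ℝ) → (t : ℝ) < (i : ℝ) * T / n →
      UniformFun.toFun f s = UniformFun.toFun f t}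

/-- `Q_∞([0,T];Y) = ⋃_{n ∈ ℕ} Q_n([0,T];Y)`. -/
def Qinfty (Y : Type*) [UniformSpace Y] (T : ℝ) : Set (PathSpace Y T) :=
  ⋃ n ∈ Set.Ici 1, Qn Y T n

/-- `Q([0,T];Y)`: the closure of `Q_∞([0,T];Y)` in the topology of uniform convergence. -/
def Qspace (Y : Type*) [UniformSpace Y] (T : ℝ) : Set (PathSpace Y T) :=
  closure (Qinfty Y T)

/-- `C([0,T];Y)` viewed inside the path space. -/
def Cspace (Y : Type*) [UniformSpace Y] (T : ℝ) : Set (PathSpace Y T) :=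
  {f | Continuous (UniformFun.toFun f)}

/-!
A function in `Q_n` is locally constant off the grid `{i T / n}` and takes finitely many
values. Both properties pass to uniform limits in the form needed: continuity at a point
lying off every grid (such as `T r` with `r` irrational), and total boundedness of the range,
which in a topological vector space implies von Neumann boundedness. The points lying on
some grid form a countable set.
-/

namespace UniformFun

variable {α β : Type*} [UniformSpace β] {S : Set (UniformFun α β)} {f : UniformFun α β}

theorem continuousAt_of_mem_closure [TopologicalSpace α] (hf : f ∈ closure S) {x : α}
    (hS : ∀ g ∈ S, ContinuousAt (toFun g) x) : ContinuousAt (toFun f) x := by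
  refine continuousAt_of_locally_uniform_approx_of_continuousAt fun V hV => ?_
  obtain ⟨g, hgS, hgV⟩ :=
    (mem_closure_iff_nhds_basis (UniformFun.hasBasis_nhds α β f)).mp hf V hV
  exact ⟨univ, univ_mem, toFun g, hS g hgS, fun y _ => hgV y⟩

theorem totallyBounded_range_of_mem_closure (hf : f ∈ closure S)
    (hS : ∀ g ∈ S, (range (toFun g)).Finite) : TotallyBounded (range (toFun f)) := by
  intro V hV
  obtain ⟨g, hgS, hgV⟩ :=
    (mem_closure_iff_nhds_basis (UniformFun.hasBasis_nhds α β f)).mp hf V hV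
  refine ⟨range (toFun g), hS g hgS, ?_⟩
  rintro _ ⟨x, rfl⟩
  exact mem_biUnion ⟨x, rfl⟩ (hgV x)

end UniformFun

theorem exists_mem_Ioo_of_ne_grid {T x : ℝ} {n : ℕ} (hn : 0 < n) (hx : x ∈ Icc 0 T)
    (hgrid : ∀ i ≤ n, x ≠ i * T / n) :
    ∃ i : ℕ, 1 ≤ i ∧ i ≤ n ∧ x ∈ Ioo ((i - 1) * T / n) (i * T / n) := by
  have hn₀ : (0 : ℝ) < n := Nat.cast_pos.mpr hn
  have hx₀ : 0 < x := hx.1.lt_of_ne (by simpa using (hgrid 0 (Nat.zero_le n)).symm)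
  have hT : 0 < T := hx₀.trans_le hx.2
  set y := x * n / T
  have hxy : x = y * T / n := by simp only [y]; field_simp
  have hy₀ : 0 < y := by positivity
  have hyn : y ≤ n := by rw [div_le_iff₀ hT]; nlinarith [hx.2]
  refine ⟨⌈y⌉₊, Nat.ceil_pos.mpr hy₀, Nat.ceil_le.mpr hyn,
    ?_, ?_⟩
  · have : (⌈y⌉₊ : ℝ) - 1 < y := by linarith [Nat.ceil_lt_add_one hy₀.le]
    rw [hxy]; gcongr
  · have hne : y ≠ ⌈y⌉₊ := fun h => hgrid _ (Nat.ceil_le.mpr hyn) (by rw [hxy, ← h])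
    rw [hxy]; gcongr; exact (Nat.le_ceil y).lt_of_ne hne

theorem Irrational.mul_ne_natCast_mul_div {r : ℝ} (hr : Irrational r) {T : ℝ} (hT : T ≠ 0)
    (n i : ℕ) : T * r ≠ i * T / n := by
  intro h
  refine hr ⟨i / n, ?_⟩
  have hTr : T * r = T * (i / n) := by rw [h]; ring
  push_cast
  exact (mul_left_cancel₀ hT hTr).symm

section

variable {Y : Type*} [UniformSpace Y] {T : ℝ} {n : ℕ}

namespace Qn

theorem continuousAt_of_ne_grid (hn : 0 < n) {g : PathSpace Y T} (hg : g ∈ Qn Y T n)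
    {x : Icc (0 : ℝ) T} (hgrid : ∀ i ≤ n, (x : ℝ) ≠ i * T / n) :
    ContinuousAt (UniformFun.toFun g) x := by
  obtain ⟨i, hi₁, hin, hxi⟩ := exists_mem_Ioo_of_ne_grid hn x.2 hgrid
  have hU : {t : Icc (0 : ℝ) T | (t : ℝ) ∈ Ioo ((i - 1) * T / n) (i * T / n)} ∈ 𝓝 x :=
    (isOpen_Ioo.preimage continuous_subtype_val).mem_nhds hxi
  refine Filter.EventuallyEq.continuousAt (y := UniformFun.toFun g x) ?_
  filter_upwards [hU] with t ht
  exact hg i hi₁ hin t x ht.1 ht.2 hxi.1 hxi.2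

theorem finite_range (hn : 0 < n) {g : PathSpace Y T} (hg : g ∈ Qn Y T n) :
    (range (UniformFun.toFun g)).Finite := by
  set G := UniformFun.toFun g
  have hnodes : (⋃ i ∈ Finset.range (n + 1), G '' (Subtype.val ⁻¹' {i * T / n})).Finite :=
    (Finset.finite_toSet _).biUnion fun i _ =>
      ((subsingleton_singleton.preimage Subtype.val_injective).image G).finite
  have hcells : (⋃ i ∈ Finset.Icc 1 n,
      G '' (Subtype.val ⁻¹' Ioo ((i - 1) * T / n) (i * T / n))).Finite := by
    refine (Finset.finite_toSet _).biUnion fun i hi => Set.Subsingleton.finite ?_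
    obtain ⟨hi₁, hin⟩ := Finset.mem_Icc.mp hi
    rintro _ ⟨s, hs, rfl⟩ _ ⟨t, ht, rfl⟩
    exact hg i hi₁ hin s t hs.1 hs.2 ht.1 ht.2
  refine (hnodes.union hcells).subset ?_
  rintro _ ⟨x, rfl⟩
  by_cases hgrid : ∃ i ≤ n, (x : ℝ) = i * T / n
  · obtain ⟨i, hin, hxi⟩ := hgrid
    exact Or.inl (mem_biUnion (Finset.mem_range_succ_iff.mpr hin) (mem_image_of_mem G hxi))
  · push Not at hgrid
    obtain ⟨i, hi₁, hin, hxi⟩ := exists_mem_Ioo_of_ne_grid hn x.2 hgrid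
    exact Or.inr (mem_biUnion (Finset.mem_Icc.mpr ⟨hi₁, hin⟩) (mem_image_of_mem G hxi))

end Qn

theorem continuousAt_of_mem_Qspace {f : PathSpace Y T} (hf : f ∈ Qspace Y T)
    {x : Icc (0 : ℝ) T} (hgrid : ∀ n i : ℕ, (x : ℝ) ≠ i * T / n) :
    ContinuousAt (UniformFun.toFun f) x := by
  refine UniformFun.continuousAt_of_mem_closure hf fun g hg => ?_
  obtain ⟨n, hn, hgn⟩ := mem_iUnion₂.mp hg
  exact Qn.continuousAt_of_ne_grid hn hgn fun i _ => hgrid n i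

theorem totallyBounded_range_of_mem_Qspace {f : PathSpace Y T} (hf : f ∈ Qspace Y T) :
    TotallyBounded (range (UniformFun.toFun f)) := by
  refine UniformFun.totallyBounded_range_of_mem_closure hf fun g hg => ?_
  obtain ⟨n, hn, hgn⟩ := mem_iUnion₂.mp hg
  exact Qn.finite_range hn hgn

end

theorem mem_Qspace_bounded_and_continuous_general {Y : Type*} [AddCommGroup Y] [Module ℝ Y]
    [UniformSpace Y] [IsUniformAddGroup Y] [ContinuousSMul ℝ Y]
    (T : ℝ) (hT : 0 < T) (f : PathSpace Y T) (hf : f ∈ Qspace Y T) :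
    Bornology.IsVonNBounded ℝ (Set.range (UniformFun.toFun f)) ∧
    (∀ r : ℝ, Irrational r → ∀ (hr : T * r ∈ Set.Icc (0 : ℝ) T),
      ContinuousAt (UniformFun.toFun f) ⟨T * r, hr⟩) ∧
    Set.Countable {t : Set.Icc (0 : ℝ) T | ¬ ContinuousAt (UniformFun.toFun f) t} := by
  refine ⟨(totallyBounded_range_of_mem_Qspace hf).isVonNBounded ℝ,
    fun r hr _ => continuousAt_of_mem_Qspace hf (hr.mul_ne_natCast_mul_div hT.ne'), ?_⟩
  have hgrid : (range fun p : ℕ × ℕ => (p.2 : ℝ) * T / p.1).Countable := countable_range _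
  refine (hgrid.preimage Subtype.val_injective).mono fun t ht => ?_
  by_contra hoff
  exact ht (continuousAt_of_mem_Qspace hf fun n i h => hoff ⟨(n, i), h.symm⟩)

/-- Every `f ∈ Q([0,T];Y)` has bounded range in `Y`, is continuous at every irrational
multiple `T·r` of `T`, and consequently is continuous outside an at most countable set. -/
theorem mem_Qspace_bounded_and_continuous {Y : Type*} [AddCommGroup Y] [Module ℝ Y]
    [UniformSpace Y] [IsUniformAddGroup Y] [ContinuousSMul ℝ Y] [LocallyConvexSpace ℝ Y]
    [T2Space Y] (T : ℝ) (hT : 0 < T) (f : PathSpace Y T) (hf : f ∈ Qspace Y T) :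
    Bornology.IsVonNBounded ℝ (Set.range (UniformFun.toFun f)) ∧
    (∀ r : ℝ, Irrational r → ∀ (hr : T * r ∈ Set.Icc (0 : ℝ) T),
      ContinuousAt (UniformFun.toFun f) ⟨T * r, hr⟩) ∧
    Set.Countable {t : Set.Icc (0 : ℝ) T | ¬ ContinuousAt (UniformFun.toFun f) t} :=
  mem_Qspace_bounded_and_continuous_general T hT f hf
end
end

section
/- Suppose that every compact subset of Y is metrizable, and let M ⊆ Q([0,T];Y) be such that the set {f(t) : t ∈ [0,T], f ∈ M} is relatively compact in Y. Then M, equipped with the topology of uniform convergence, is metrizable. -/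
open Filter Topology Set

noncomputable section

/-!
All values of members of `M` lie in the compact set `K`, so `M` embeds uniformly into the space
`[0,T] →ᵤ K` of `K`-valued functions with the uniformity of uniform convergence. A
compact space carries a unique uniformity; for metrizable `K` this is the uniformity of a metric,
hence countably generated, and then so is the uniformity of `[0,T] →ᵤ K`. A Hausdorff uniform
space with countably generated uniformity is metrizable, and so is every subspace.
-/

open scoped Uniformity UniformConvergence

theorem isCountablyGenerated_uniformity_of_compactSpace {γ : Type*} [UniformSpace γ]
    [CompactSpace γ] [TopologicalSpace.MetrizableSpace γ] : IsCountablyGenerated (𝓤 γ) := by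
  let m : MetricSpace γ := TopologicalSpace.metrizableSpaceMetric γ
  have hm : m.toUniformSpace = ‹UniformSpace γ› := unique_uniformity_of_compact rfl rfl
  rw [← hm]
  infer_instance

namespace UniformFun

theorem isCountablyGenerated_uniformity (α β : Type*) [UniformSpace β]
    [IsCountablyGenerated (𝓤 β)] : IsCountablyGenerated (𝓤 (α →ᵤ β)) :=
  let ⟨_, hV⟩ := (𝓤 β).exists_antitone_basis
  (UniformFun.hasBasis_uniformity_of_basis α β hV.toHasBasis).isCountablyGenerated

theorem metrizableSpace_of_compactSpace (α β : Type*) [UniformSpace β] [CompactSpace β]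
    [TopologicalSpace.MetrizableSpace β] : TopologicalSpace.MetrizableSpace (α →ᵤ β) :=
  have := isCountablyGenerated_uniformity_of_compactSpace (γ := β)
  have := isCountablyGenerated_uniformity α β
  UniformSpace.metrizableSpace

def codRestrict {α β : Type*} {K : Set β} (M : Set (α →ᵤ β)) (hMK : ∀ f ∈ M, ∀ a, toFun f a ∈ K)
    (f : M) : α →ᵤ K :=
  ofFun fun a => ⟨toFun f.1 a, hMK f.1 f.2 a⟩

theorem isUniformEmbedding_codRestrict {α β : Type*} [UniformSpace β] {K : Set β}
    (M : Set (α →ᵤ β)) (hMK : ∀ f ∈ M, ∀ a, toFun f a ∈ K) :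
    IsUniformEmbedding (codRestrict M hMK) :=
  (UniformFun.postcomp_isUniformEmbedding isUniformEmbedding_subtype_val).of_comp_iff.mp
    isUniformEmbedding_subtype_val

end UniformFun

theorem metrizable_of_values_relatively_compact_general {Y : Type*}
    [UniformSpace Y] (T : ℝ)
    (hcm : ∀ K : Set Y, IsCompact K → TopologicalSpace.MetrizableSpace K)
    (M : Set (PathSpace Y T))
    (hval : IsCompact (closure {y : Y | ∃ f ∈ M, ∃ t : Set.Icc (0 : ℝ) T,
      UniformFun.toFun f t = y})) :
    TopologicalSpace.MetrizableSpace M := by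
  set K : Set Y := closure {y : Y | ∃ f ∈ M, ∃ t : Set.Icc (0 : ℝ) T, UniformFun.toFun f t = y}
  have hMK : ∀ f ∈ M, ∀ t, UniformFun.toFun f t ∈ K := fun f hf t => subset_closure ⟨f, hf, t, rfl⟩
  have : CompactSpace K := isCompact_iff_compactSpace.mp hval
  have : TopologicalSpace.MetrizableSpace K := hcm K hval
  have := UniformFun.metrizableSpace_of_compactSpace (Set.Icc (0 : ℝ) T) K
  exact (UniformFun.isUniformEmbedding_codRestrict M hMK).isEmbedding.metrizableSpace

/-- If every compact subset of `Y` is metrizable and the set of all values of members of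
`M ⊆ Q([0,T];Y)` is relatively compact in `Y`, then `M`, with the topology of uniform
convergence, is metrizable. -/
theorem metrizable_of_values_relatively_compact {Y : Type*} [AddCommGroup Y] [Module ℝ Y]
    [UniformSpace Y] [IsUniformAddGroup Y] [ContinuousSMul ℝ Y] [LocallyConvexSpace ℝ Y]
    [T2Space Y] (T : ℝ) (hT : 0 < T)
    (hcm : ∀ K : Set Y, IsCompact K → TopologicalSpace.MetrizableSpace K)
    (M : Set (PathSpace Y T)) (hMQ : M ⊆ Qspace Y T)
    (hval : IsCompact (closure {y : Y | ∃ f ∈ M, ∃ t : Set.Icc (0 : ℝ) T,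
      UniformFun.toFun f t = y})) :
    TopologicalSpace.MetrizableSpace M :=
  metrizable_of_values_relatively_compact_general T hcm M hval
end
end

section
/- Let K be a compact subset of Y, let n ∈ ℕ, τ = T/n, t_i = iτ, and let C_n([0,T];K) be the set of functions f : [0,T] → K satisfying f(t) = ((t − t_{i−1})/τ) f(t_i) + ((t_i − t)/τ) f(t_{i−1}) for all t ∈ [t_{i−1}, t_i] and every i ∈ {1,…,n} (i.e. f is affine on each partition interval with nodal values in K). Then C_n([0,T];K) is a compact subset of C([0,T];Y) with the topology of uniform convergence. -/
open Filter Topology Set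

noncomputable section

/-- `C_n([0,T];K)`: functions `[0,T] → K` that are affine on each partition interval
`[t_{i-1}, t_i]`, `t_i = i·(T/n)`, with values in `K`. -/
def CnK (Y : Type*) [AddCommGroup Y] [Module ℝ Y] [UniformSpace Y] (T : ℝ) (n : ℕ)
    (K : Set Y) : Set (PathSpace Y T) :=
  {f | (∀ t : Set.Icc (0 : ℝ) T, UniformFun.toFun f t ∈ K) ∧
    (∀ i : ℕ, 1 ≤ i → i ≤ n →
      ∀ (h1 : ((i : ℝ) - 1) * (T / n) ∈ Set.Icc (0 : ℝ) T)
        (h2 : (i : ℝ) * (T / n) ∈ Set.Icc (0 : ℝ) T),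
      ∀ t : Set.Icc (0 : ℝ) T,
        ((i : ℝ) - 1) * (T / n) ≤ (t : ℝ) → (t : ℝ) ≤ (i : ℝ) * (T / n) →
        UniformFun.toFun f t =
          (((t : ℝ) - ((i : ℝ) - 1) * (T / n)) / (T / n)) •
              UniformFun.toFun f ⟨(i : ℝ) * (T / n), h2⟩ +
            (((i : ℝ) * (T / n) - (t : ℝ)) / (T / n)) •
              UniformFun.toFun f ⟨((i : ℝ) - 1) * (T / n), h1⟩)}


/-!
A path in `C_n([0,T];K)` is the interpolant `t ↦ ∑ₖ tent (t/τ - k) • f(tₖ)` of its nodal values.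
The hats form a partition of unity on `[0,T]`, so in a locally convex
space interpolation is continuous from `Y^{n+1}` into the topology of uniform convergence, and
interpolants are continuous in `t`. Hence `C_n([0,T];K)`, which is closed, lies in the compact
image of `K^{n+1}`.
-/

def tent (x : ℝ) : ℝ := max 0 (1 - |x|)

lemma tent_nonneg (x : ℝ) : 0 ≤ tent x := le_max_left _ _

@[fun_prop]
lemma continuous_tent : Continuous tent := by
  unfold tent; fun_prop

lemma tent_eq_zero {x : ℝ} (hx : 1 ≤ |x|) : tent x = 0 :=
  max_eq_left (by linarith)

lemma tent_of_mem_Icc {x : ℝ} (hx : x ∈ Icc (0 : ℝ) 1) : tent x = 1 - x := by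
  rw [tent, abs_of_nonneg hx.1, max_eq_right (by linarith [hx.2])]

lemma tent_sub_one {x : ℝ} (hx : x ∈ Icc (0 : ℝ) 1) : tent (x - 1) = x := by
  rw [tent, abs_of_nonpos (by linarith [hx.2]), max_eq_right (by linarith [hx.1])]
  ring

theorem sum_tent_smul {Y : Type*} [AddCommGroup Y] [Module ℝ Y] {n : ℕ}
    (v : Fin (n + 1) → Y) (i : Fin n) {x : ℝ} (hx : x ∈ Icc (i : ℝ) (i + 1)) :
    ∑ k : Fin (n + 1), tent (x - (k : ℕ)) • v k =
      (x - i) • v i.succ + (i + 1 - x) • v i.castSucc := by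
  have hx' : x - i ∈ Icc (0 : ℝ) 1 := ⟨by linarith [hx.1], by linarith [hx.2]⟩
  rw [Fintype.sum_eq_add i.succ i.castSucc Fin.castSucc_lt_succ.ne']
  · rw [Fin.val_succ, Fin.val_castSucc, Nat.cast_add_one, ← sub_sub, tent_sub_one hx',
      tent_of_mem_Icc hx']
    module
  · rintro k ⟨hk_succ, hk_cast⟩
    have hk : (k : ℕ) + 1 ≤ i ∨ (i : ℕ) + 2 ≤ k := by
      rw [Ne, Fin.ext_iff, Fin.val_succ] at hk_succ
      rw [Ne, Fin.ext_iff, Fin.val_castSucc] at hk_cast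
      omega
    rw [tent_eq_zero, zero_smul]
    rcases hk with hk | hk
    · have : (k : ℝ) + 1 ≤ i := by exact_mod_cast hk
      exact le_abs.2 (Or.inl (by linarith [hx.1]))
    · have : (i : ℝ) + 2 ≤ k := by exact_mod_cast hk
      exact le_abs.2 (Or.inr (by linarith [hx.2]))

lemma exists_fin_mem_Icc {n : ℕ} (hn : 1 ≤ n) {x : ℝ} (hx : x ∈ Icc (0 : ℝ) n) :
    ∃ i : Fin n, x ∈ Icc (i : ℝ) (i + 1) := by
  rcases hx.2.lt_or_eq with hlt | rfl
  · refine ⟨⟨⌊x⌋₊, (Nat.floor_lt hx.1).2 hlt⟩, Nat.floor_le hx.1, (Nat.lt_floor_add_one x).le⟩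
  · refine ⟨⟨n - 1, by omega⟩, ?_, ?_⟩ <;> simp [Nat.cast_sub hn]

lemma sum_tent_eq_one {n : ℕ} (hn : 1 ≤ n) {x : ℝ} (hx : x ∈ Icc (0 : ℝ) n) :
    ∑ k : Fin (n + 1), tent (x - (k : ℕ)) = 1 := by
  obtain ⟨i, hi⟩ := exists_fin_mem_Icc hn hx
  simpa using sum_tent_smul (fun _ => (1 : ℝ)) i hi

/-- At each point the error is a convex combination of the errors of the `v i`, so it stays in
any convex neighbourhood of `0` containing all of those. -/
theorem continuous_ofFun_sum_smul {X ι Y : Type*} [Fintype ι] [AddCommGroup Y] [Module ℝ Y]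
    [UniformSpace Y] [IsUniformAddGroup Y] [LocallyConvexSpace ℝ Y] {φ : ι → X → ℝ}
    (hφ_nonneg : ∀ i x, 0 ≤ φ i x) (hφ_sum : ∀ x, ∑ i, φ i x = 1) :
    Continuous fun v : ι → Y => UniformFun.ofFun fun x => ∑ i, φ i x • v i := by
  refine continuous_iff_continuousAt.2 fun v₀ => ?_
  rw [ContinuousAt, (UniformFun.hasBasis_nhds X Y _).tendsto_right_iff]
  intro V hV
  rw [uniformity_eq_comap_nhds_zero Y, mem_comap] at hV
  obtain ⟨W, hW, hWV⟩ := hV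
  obtain ⟨C, ⟨hC, hC_convex⟩, hCW⟩ := (LocallyConvexSpace.convex_basis_zero ℝ Y).mem_iff.1 hW
  have hclose : ∀ᶠ v in 𝓝 v₀, ∀ i, v i - v₀ i ∈ C := by
    refine eventually_all.2 fun i => ?_
    have : Tendsto (fun v : ι → Y => v i - v₀ i) (𝓝 v₀) (𝓝 0) := by
      simpa using ((continuous_apply i).tendsto v₀).sub_const (v₀ i)
    exact this hC
  filter_upwards [hclose] with v hv x
  refine hWV (hCW ?_)
  simp only [UniformFun.toFun_ofFun, ← Finset.sum_sub_distrib, ← smul_sub]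
  exact hC_convex.sum_mem (fun i _ => hφ_nonneg i x) (hφ_sum x) fun i _ => hv i

lemma div_div_natCast_mem_Icc {T t : ℝ} (hT : 0 < T) {n : ℕ} (ht : t ∈ Icc 0 T) :
    t / (T / n) ∈ Icc (0 : ℝ) n := by
  rw [div_div_eq_mul_div]
  refine ⟨by have := ht.1; positivity, (div_le_iff₀ hT).2 ?_⟩
  rw [mul_comm]
  exact mul_le_mul_of_nonneg_left ht.2 n.cast_nonneg

lemma natCast_mul_div_mem_Icc {T : ℝ} (hT : 0 ≤ T) {n k : ℕ} (hk : k ≤ n) :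
    (k : ℝ) * (T / n) ∈ Icc 0 T := by
  rw [show (k : ℝ) * (T / n) = T * (k / n) by ring]
  exact ⟨by positivity, mul_le_of_le_one_right hT (div_le_one_of_le₀ (by exact_mod_cast hk)
    n.cast_nonneg)⟩

section Interpolation

variable {Y : Type*} [AddCommGroup Y] [Module ℝ Y] [UniformSpace Y] {T : ℝ} {n : ℕ}

/-- The piecewise affine path with value `v k` at the node `t_k = k T / n`. -/
def interpolant (T : ℝ) (n : ℕ) (v : Fin (n + 1) → Y) : PathSpace Y T :=
  UniformFun.ofFun fun t => ∑ k : Fin (n + 1), tent (t / (T / n) - (k : ℕ)) • v k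

lemma continuous_toFun_interpolant [ContinuousAdd Y] [ContinuousSMul ℝ Y]
    (v : Fin (n + 1) → Y) : Continuous (UniformFun.toFun (interpolant T n v)) := by
  simp only [interpolant, UniformFun.toFun_ofFun]
  fun_prop

lemma continuous_interpolant [IsUniformAddGroup Y] [LocallyConvexSpace ℝ Y] (hT : 0 < T)
    (hn : 1 ≤ n) : Continuous (interpolant T n : (Fin (n + 1) → Y) → PathSpace Y T) :=
  continuous_ofFun_sum_smul (fun _ _ => tent_nonneg _)
    fun t => sum_tent_eq_one hn (div_div_natCast_mem_Icc hT t.2)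

theorem exists_eq_interpolant_of_mem_CnK (hT : 0 < T) (hn : 1 ≤ n) {K : Set Y}
    {f : PathSpace Y T} (hf : f ∈ CnK Y T n K) :
    ∃ v : Fin (n + 1) → Y, (∀ k, v k ∈ K) ∧ f = interpolant T n v := by
  have hτ : 0 < T / n := div_pos hT (by exact_mod_cast hn)
  refine ⟨fun k => UniformFun.toFun f ⟨(k : ℕ) * (T / n),
    natCast_mul_div_mem_Icc hT.le k.is_le⟩, fun k => hf.1 _, ?_⟩
  refine UniformFun.toFun.injective (funext fun t => ?_)
  obtain ⟨i, hi⟩ := exists_fin_mem_Icc hn (div_div_natCast_mem_Icc hT t.2)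
  have hi_cast : ((i + 1 : ℕ) : ℝ) - 1 = i := by push_cast; ring
  have hlo : (((i + 1 : ℕ) : ℝ) - 1) * (T / n) ≤ t := by
    rw [hi_cast]; exact (le_div_iff₀ hτ).1 hi.1
  have hhi : t ≤ ((i + 1 : ℕ) : ℝ) * (T / n) := by
    rw [Nat.cast_add_one]; exact (div_le_iff₀ hτ).1 hi.2
  have hnode_lo := natCast_mul_div_mem_Icc hT.le (Nat.le_of_lt i.is_lt)
  rw [← hi_cast] at hnode_lo
  simp only [interpolant, UniformFun.toFun_ofFun]
  rw [hf.2 (i + 1) (by omega) i.is_lt hnode_lo (natCast_mul_div_mem_Icc hT.le i.is_lt) t hlo hhi,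
    sum_tent_smul _ i hi]
  congr 3
  · rw [hi_cast, sub_div, mul_div_cancel_right₀ _ hτ.ne']
  · rw [sub_div, mul_div_cancel_right₀ _ hτ.ne', Nat.cast_add_one]
  · exact congrArg _ (Subtype.ext (congrArg (· * (T / n)) hi_cast))

end Interpolation

theorem isClosed_CnK {Y : Type*} [AddCommGroup Y] [Module ℝ Y] [UniformSpace Y]
    [ContinuousAdd Y] [ContinuousConstSMul ℝ Y] [T2Space Y] {T : ℝ} {n : ℕ} {K : Set Y}
    (hK : IsClosed K) : IsClosed (CnK Y T n K) := by
  have heval (t : Icc (0 : ℝ) T) : Continuous fun f : PathSpace Y T => UniformFun.toFun f t :=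
    (UniformFun.uniformContinuous_eval Y t).continuous
  simp only [CnK, ofPred_and, ofPred_forall]
  exact (isClosed_iInter fun t => hK.preimage (heval t)).inter <|
    isClosed_iInter fun i => isClosed_iInter fun _ => isClosed_iInter fun _ =>
      isClosed_iInter fun _ => isClosed_iInter fun _ => isClosed_iInter fun t =>
      isClosed_iInter fun _ => isClosed_iInter fun _ =>
      isClosed_eq (heval t) (((heval _).const_smul _).add ((heval _).const_smul _))

/-- If `K ⊆ Y` is compact then `C_n([0,T];K)` consists of continuous functions and is a
compact subset of `C([0,T];Y)` with the topology of uniform convergence. -/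
theorem piecewise_affine_compact {Y : Type*} [AddCommGroup Y] [Module ℝ Y]
    [UniformSpace Y] [IsUniformAddGroup Y] [ContinuousSMul ℝ Y] [LocallyConvexSpace ℝ Y]
    [T2Space Y] (T : ℝ) (hT : 0 < T) (n : ℕ) (hn : 1 ≤ n)
    (K : Set Y) (hK : IsCompact K) :
    (∀ f ∈ CnK Y T n K, Continuous (UniformFun.toFun f)) ∧
      IsCompact (CnK Y T n K) := by
  have hrep {f} (hf : f ∈ CnK Y T n K) := exists_eq_interpolant_of_mem_CnK hT hn hf
  refine ⟨fun f hf => ?_, ?_⟩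
  · obtain ⟨v, -, rfl⟩ := hrep hf
    exact continuous_toFun_interpolant v
  · have hsub : CnK Y T n K ⊆ interpolant T n '' univ.pi fun _ => K := fun f hf => by
      obtain ⟨v, hvK, rfl⟩ := hrep hf
      exact ⟨v, fun k _ => hvK k, rfl⟩
    exact ((isCompact_univ_pi fun _ => hK).image
      (continuous_interpolant hT hn)).of_isClosed_subset (isClosed_CnK hK.isClosed) hsub
end
end

section
/- Under the stated hypotheses, each F_n is μ_n-measurable and F is μ-measurable. If in addition all F_n and F are non-negative and for every r ∈ (0,1) the set D_r = {x ∈ K_{r,∞} : there exist x_n ∈ K_{r,n} with x_n → x and liminf_n F_n(x_n) < F(x)} satisfies μ*(D_r) = 0, where μ* is the outer measure associated with μ, then ∫_Z F dμ ≤ liminf_{n→∞} ∫_Z F_n dμ_n. -/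
/-!
The measurability claims hold because `F_n` and `F` are Borel on closed sets `K_{r,n}` of
measure at least `1 - r`; for `μ` this bound comes from the portmanteau inequality
`μ G ≤ liminf μ_n G` for open `G`, proved with Urysohn functions taken from the Stone–Čech
compactification together with inner regularity of `μ`.

By a layer-cake discretisation, the integral inequality follows from the level-set estimate
`μ {t < |F|} ≤ liminf μ_n {t ≤ |F_n|}` for every `t`. Outside the null set `D_r` and the set
`K_{r,∞}ᶜ` of measure at most `r`, a point with `t < |F|` lies in the interior of one of the
increasing sets `S_k = {y | ∀ n ≥ k, y ∈ K_{r,n} → t ≤ |F_n y|}`: otherwise first countability of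
`K_{r,0}` yields `u_n ∈ K_{r,n}` converging to it with `F_n (u_n) < t` infinitely often. The
portmanteau inequality on the open sets `interior S_k` gives the estimate up to `2r`, and `r → 0`.
-/

open Filter Topology Set MeasureTheory
open scoped ENNReal NNReal BoundedContinuousFunction

namespace ENNReal

theorem le_liminf_add {ι : Type*} {l : Filter ι} {u v : ι → ℝ≥0∞} :
    l.liminf u + l.liminf v ≤ l.liminf (u + v) := by
  rw [liminf_eq, liminf_eq, sSup_eq_iSup, sSup_eq_iSup]
  refine biSup_add_biSup_le' ⟨0, .of_forall fun _ => zero_le⟩ ⟨0, .of_forall fun _ => zero_le⟩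
    fun a ha b hb => ?_
  exact le_liminf_of_le (by isBoundedDefault) ((ha.and hb).mono fun _ h => add_le_add h.1 h.2)

theorem sum_liminf_le_liminf_sum {ι κ : Type*} {l : Filter κ} (s : Finset ι)
    (u : ι → κ → ℝ≥0∞) :
    ∑ i ∈ s, l.liminf (u i) ≤ l.liminf fun b => ∑ i ∈ s, u i b := by
  induction s using Finset.cons_induction with
  | empty => simp
  | cons a s ha ih =>
    simp only [Finset.sum_cons]
    exact (add_le_add le_rfl ih).trans le_liminf_add

theorem le_of_forall_lt_one_le_add {a b : ℝ≥0∞}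
    (h : ∀ r : ℝ, 0 < r → r < 1 → a ≤ b + ENNReal.ofReal r) : a ≤ b := by
  refine ENNReal.le_of_forall_pos_le_add fun ε hε _ => ?_
  calc a ≤ b + ENNReal.ofReal (min ε 2⁻¹) :=
        h _ (lt_min hε (by norm_num)) ((min_le_right _ _).trans_lt (by norm_num))
    _ ≤ b + ε := by
        gcongr
        exact (ENNReal.ofReal_le_ofReal (min_le_left _ _)).trans_eq ENNReal.ofReal_coe_nnreal

theorem min_natCast_mul_le_sum_ite (a s : ℝ≥0∞) (m : ℕ) :
    min a (m * s) ≤ ∑ i ∈ Finset.range m, if (i : ℝ≥0∞) * s < a then s else 0 := by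
  induction m with
  | zero => simp
  | succ m ih =>
    rw [Finset.sum_range_succ]
    split_ifs with h
    · calc min a ((m + 1 : ℕ) * s) ≤ (m + 1 : ℕ) * s := min_le_right _ _
        _ = min a (m * s) + s := by rw [min_eq_right h.le]; push_cast; ring
        _ ≤ _ := by gcongr
    · rw [not_lt] at h
      rw [min_eq_left h] at ih
      simpa using (min_le_left _ _).trans ih

theorem sum_ite_natCast_mul_le_le_add (a s : ℝ≥0∞) (m : ℕ) :
    ∑ i ∈ Finset.range m, (if (i : ℝ≥0∞) * s ≤ a then s else 0) ≤ a + s := by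
  induction m with
  | zero => simp
  | succ m ih =>
    rw [Finset.sum_range_succ]
    split_ifs with h
    · gcongr
      calc ∑ i ∈ Finset.range m, (if (i : ℝ≥0∞) * s ≤ a then s else 0)
          ≤ (Finset.range m).card • s :=
            Finset.sum_le_card_nsmul _ _ _ fun i _ => by split_ifs <;> simp
        _ = m * s := by simp [nsmul_eq_mul]
        _ ≤ a := h
    · simpa using ih

end ENNReal

theorem EReal.coe_abs_of_nonneg {a : EReal} (ha : 0 ≤ a) : (a.abs : EReal) = a := by
  induction a using EReal.rec with
  | bot => simp at ha
  | coe x => rw [EReal.coe_abs, abs_of_nonneg (EReal.coe_nonneg.1 ha)]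
  | top => simp

theorem EReal.measurable_abs : Measurable EReal.abs :=
  EReal.measurable_of_measurable_real (ENNReal.measurable_ofReal.comp _root_.measurable_abs)

section LayerSums

variable {α : Type*} [MeasurableSpace α] {μ : Measure α} {f : α → ℝ≥0∞}

theorem lintegral_min_natCast_mul_le_sum_mul_measure (hf : AEMeasurable f μ) (s : ℝ≥0∞) (m : ℕ) :
    ∫⁻ x, min (f x) (m * s) ∂μ ≤ ∑ i ∈ Finset.range m, s * μ {x | i * s < f x} := by
  have hmeas (i : ℕ) : NullMeasurableSet {x | i * s < f x} μ :=
    nullMeasurableSet_lt aemeasurable_const hf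
  calc ∫⁻ x, min (f x) (m * s) ∂μ
      ≤ ∫⁻ x, ∑ i ∈ Finset.range m, {x | i * s < f x}.indicator (fun _ => s) x ∂μ := by
        refine lintegral_mono fun x => (ENNReal.min_natCast_mul_le_sum_ite _ _ _).trans_eq ?_
        simp only [indicator_apply, mem_ofPred_eq]
    _ = ∑ i ∈ Finset.range m, s * μ {x | i * s < f x} := by
        rw [lintegral_finsetSum' _ fun i _ => aemeasurable_const.indicator₀ (hmeas i)]
        exact Finset.sum_congr rfl fun i _ => lintegral_indicator_const₀ (hmeas i) s

theorem sum_mul_measure_le_le_lintegral_add (hf : AEMeasurable f μ) (s : ℝ≥0∞) (m : ℕ) :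
    ∑ i ∈ Finset.range m, s * μ {x | i * s ≤ f x} ≤ ∫⁻ x, f x ∂μ + s * μ univ := by
  have hmeas (i : ℕ) : NullMeasurableSet {x | i * s ≤ f x} μ :=
    nullMeasurableSet_le aemeasurable_const hf
  calc ∑ i ∈ Finset.range m, s * μ {x | i * s ≤ f x}
      = ∫⁻ x, ∑ i ∈ Finset.range m, {x | i * s ≤ f x}.indicator (fun _ => s) x ∂μ := by
        rw [lintegral_finsetSum' _ fun i _ => aemeasurable_const.indicator₀ (hmeas i)]
        exact Finset.sum_congr rfl fun i _ => (lintegral_indicator_const₀ (hmeas i) s).symm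
    _ ≤ ∫⁻ x, (f x + s) ∂μ := by
        refine lintegral_mono fun x =>
          le_of_eq_of_le ?_ (ENNReal.sum_ite_natCast_mul_le_le_add (f x) s m)
        simp only [indicator_apply, mem_ofPred_eq]
    _ = ∫⁻ x, f x ∂μ + s * μ univ := by
        rw [lintegral_add_right' _ aemeasurable_const, lintegral_const]

theorem lintegral_eq_iSup_lintegral_min (hf : AEMeasurable f μ) {s : ℝ≥0∞} (hs : s ≠ 0) :
    ∫⁻ x, f x ∂μ = ⨆ m : ℕ, ∫⁻ x, min (f x) (m * s) ∂μ := by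
  have hsup (a : ℝ≥0∞) : ⨆ m : ℕ, min a (m * s) = a := by
    rw [← inf_iSup_eq, ← ENNReal.iSup_mul, ENNReal.iSup_natCast, ENNReal.top_mul hs]
    exact inf_top_eq a
  calc ∫⁻ x, f x ∂μ = ∫⁻ x, ⨆ m : ℕ, min (f x) (m * s) ∂μ := lintegral_congr fun x => (hsup _).symm
    _ = ⨆ m : ℕ, ∫⁻ x, min (f x) (m * s) ∂μ :=
        lintegral_iSup' (fun m => hf.min aemeasurable_const)
          (ae_of_all _ fun x m m' h => min_le_min le_rfl (by gcongr))

end LayerSums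

theorem lintegral_le_liminf_lintegral_of_measure_lt_le_liminf {α : Type*} [MeasurableSpace α]
    {μ : Measure α} {ν : ℕ → Measure α} [∀ n, IsProbabilityMeasure (ν n)]
    {f : α → ℝ≥0∞} {fs : ℕ → α → ℝ≥0∞} (hf : AEMeasurable f μ)
    (hfs : ∀ n, AEMeasurable (fs n) (ν n))
    (h : ∀ t, μ {x | t < f x} ≤ atTop.liminf fun n => ν n {x | t ≤ fs n x}) :
    ∫⁻ x, f x ∂μ ≤ atTop.liminf fun n => ∫⁻ x, fs n x ∂(ν n) := by
  refine ENNReal.le_of_forall_pos_le_add fun ε hε _ => ?_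
  have hε0 : (ε : ℝ≥0∞) ≠ 0 := by exact_mod_cast hε.ne'
  rw [lintegral_eq_iSup_lintegral_min hf hε0]
  refine iSup_le fun m => ?_
  calc ∫⁻ x, min (f x) (m * ε) ∂μ ≤ ∑ i ∈ Finset.range m, ε * μ {x | i * ε < f x} :=
        lintegral_min_natCast_mul_le_sum_mul_measure hf _ m
    _ ≤ ∑ i ∈ Finset.range m, atTop.liminf fun n => ε * ν n {x | i * ε ≤ fs n x} := by
        gcongr with i
        rw [ENNReal.liminf_const_mul_of_ne_top ENNReal.coe_ne_top]
        exact mul_le_mul_right (h _) _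
    _ ≤ atTop.liminf fun n => ∑ i ∈ Finset.range m, ε * ν n {x | i * ε ≤ fs n x} :=
        ENNReal.sum_liminf_le_liminf_sum _ _
    _ ≤ atTop.liminf fun n => ∫⁻ x, fs n x ∂(ν n) + ε := by
        refine liminf_le_liminf (.of_forall fun n => ?_)
        simpa using sum_mul_measure_le_le_lintegral_add (hfs n) ε m
    _ = (atTop.liminf fun n => ∫⁻ x, fs n x ∂(ν n)) + ε :=
        liminf_add_const _ _ _ (by isBoundedDefault) (by isBoundedDefault)

theorem CompletelyRegularSpace.exists_bcf_one_zero_of_isCompact {Z : Type*} [TopologicalSpace Z]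
    [CompletelyRegularSpace Z] {s t : Set Z} (hs : IsCompact s) (ht : IsClosed t)
    (hd : Disjoint s t) :
    ∃ f : Z →ᵇ ℝ≥0, EqOn f 1 s ∧ EqOn f 0 t ∧ ∀ x, f x ≤ 1 := by
  obtain ⟨U, hU, hUt⟩ := isInducing_stoneCechUnit.isOpen_iff.1 ht.isOpen_compl
  have hsU : stoneCechUnit '' s ⊆ U := by
    rintro _ ⟨x, hx, rfl⟩
    exact (hUt ▸ hd.subset_compl_right hx : x ∈ stoneCechUnit ⁻¹' U)
  obtain ⟨g, hg1, hg0, -, hg01⟩ := exists_continuous_one_zero_of_isCompact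
    (hs.image continuous_stoneCechUnit) hU.isClosed_compl (disjoint_compl_right_iff_subset.2 hsU)
  refine ⟨(BoundedContinuousFunction.mkOfCompact g).nnrealPart.compContinuous
    ⟨stoneCechUnit, continuous_stoneCechUnit⟩, fun x hx => ?_, fun x hx => ?_, fun x => ?_⟩
  · simpa using congrArg Real.toNNReal (hg1 (mem_image_of_mem _ hx))
  · have : stoneCechUnit x ∉ U := fun h => (hUt ▸ h : x ∈ tᶜ) hx
    simpa using congrArg Real.toNNReal (hg0 this)
  · simpa using (hg01 _).2

theorem ProbabilityMeasure.le_liminf_measure_open_of_tendsto_of_completelyRegular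
    {Z ι : Type*} [TopologicalSpace Z] [CompletelyRegularSpace Z] [MeasurableSpace Z]
    [OpensMeasurableSpace Z] {L : Filter ι} {μ : ProbabilityMeasure Z}
    [(μ : Measure Z).InnerRegular] {μs : ι → ProbabilityMeasure Z} (hμs : Tendsto μs L (𝓝 μ))
    {G : Set Z} (hG : IsOpen G) :
    (μ : Measure Z) G ≤ L.liminf fun i => (μs i : Measure Z) G := by
  rcases L.eq_or_neBot with rfl | _
  · simp
  rw [hG.measurableSet.measure_eq_iSup_isCompact]
  refine iSup₂_le fun C hCG => iSup_le fun hC => ?_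
  obtain ⟨f, hf1, hf0, hf_le⟩ := CompletelyRegularSpace.exists_bcf_one_zero_of_isCompact hC
    hG.isClosed_compl (disjoint_compl_right_iff_subset.2 hCG)
  have hf_meas : Measurable fun x => (f x : ℝ≥0∞) := by fun_prop
  have hC_le (ν : Measure Z) : ν C ≤ ∫⁻ x, f x ∂ν := by
    calc ν C ≤ ν {x | 1 ≤ (f x : ℝ≥0∞)} := measure_mono fun x hx => by simp [hf1 hx]
      _ ≤ ∫⁻ x, f x ∂ν := by simpa using mul_meas_ge_le_lintegral hf_meas 1
  have hle_G (ν : Measure Z) : ∫⁻ x, f x ∂ν ≤ ν G := by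
    rw [← lintegral_indicator_one hG.measurableSet]
    refine lintegral_mono fun x => ?_
    by_cases hx : x ∈ G
    · simpa [hx] using hf_le x
    · simp [hx, hf0 hx]
  calc (μ : Measure Z) C ≤ ∫⁻ x, f x ∂(μ : Measure Z) := hC_le _
    _ = L.liminf fun i => ∫⁻ x, f x ∂(μs i) :=
        ((ProbabilityMeasure.tendsto_iff_forall_lintegral_tendsto.1 hμs f).liminf_eq).symm
    _ ≤ L.liminf fun i => (μs i : Measure Z) G := liminf_le_liminf (.of_forall fun i => hle_G _)

theorem measure_compl_le_ofReal_of_ofReal_one_sub_le {α : Type*} [MeasurableSpace α]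
    {μ : Measure α} [IsProbabilityMeasure μ] {s : Set α} (hs : MeasurableSet s) {r : ℝ}
    (h : ENNReal.ofReal (1 - r) ≤ μ s) : μ sᶜ ≤ ENNReal.ofReal r := by
  rw [prob_compl_eq_one_sub hs, tsub_le_iff_right]
  calc (1 : ℝ≥0∞) = ENNReal.ofReal (r + (1 - r)) := by simp
    _ ≤ ENNReal.ofReal r + ENNReal.ofReal (1 - r) := ENNReal.ofReal_add_le
    _ ≤ ENNReal.ofReal r + μ s := by gcongr

theorem nullMeasurable_of_forall_exists_measurable_restrict {α β : Type*} [MeasurableSpace α]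
    [MeasurableSpace β] {μ : Measure α} {f : α → β}
    (h : ∀ r : ℝ, 0 < r → ∃ s, MeasurableSet s ∧ μ sᶜ ≤ ENNReal.ofReal r ∧
      Measurable fun x : s => f x) :
    NullMeasurable f μ := by
  choose s hs hμs hf using fun k : ℕ => h (1 / (k + 1)) Nat.one_div_pos_of_nat
  have hnull : μ (⋃ k, s k)ᶜ = 0 := by
    refine le_antisymm ?_ zero_le
    simpa using ge_of_tendsto' (ENNReal.tendsto_ofReal tendsto_one_div_add_atTop_nhds_zero_nat)
      fun k => (measure_mono (compl_subset_compl.2 (subset_iUnion s k))).trans (hμs k)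
  intro B hB
  have hpiece (k : ℕ) : MeasurableSet (s k ∩ f ⁻¹' B) := by
    convert (hs k).subtype_image (hf k hB) using 1
    ext x
    simp [and_comm]
  refine (MeasurableSet.iUnion hpiece).nullMeasurableSet.congr ?_
  filter_upwards [measure_eq_zero_iff_ae_notMem.1 hnull] with x hx
  obtain ⟨k, hk⟩ := mem_iUnion.1 (not_notMem.1 hx)
  change (x ∈ ⋃ k, s k ∩ f ⁻¹' B) = (x ∈ f ⁻¹' B)
  simp only [eq_iff_iff, mem_iUnion, mem_inter_iff, mem_preimage]
  exact ⟨fun ⟨_, _, hfx⟩ => hfx, fun hfx => ⟨k, hk, hfx⟩⟩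

theorem Filter.exists_seq_tendsto_and_frequently {α : Type*} {l : Filter α}
    [l.IsCountablyGenerated] {a : α} (ha : pure a ≤ l) {P : ℕ → α → Prop}
    (hP : ∀ s ∈ l, ∃ᶠ n in atTop, ∃ y ∈ s, P n y) :
    ∃ u : ℕ → α, Tendsto u atTop l ∧ (∀ n, u n = a ∨ P n (u n)) ∧ ∃ᶠ n in atTop, P n (u n) := by
  obtain ⟨s, hs⟩ := l.exists_antitone_basis
  obtain ⟨φ, hφ, hφP⟩ := extraction_forall_of_frequently fun j => hP (s j) (hs.mem j)
  choose y hys hyP using hφP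
  have hu (j : ℕ) : Function.extend φ y (fun _ => a) (φ j) = y j := hφ.injective.extend_apply ..
  refine ⟨Function.extend φ y fun _ => a, hs.tendsto_right_iff.2 fun J _ => ?_, fun n => ?_,
    frequently_atTop.2 fun N => ⟨φ N, hφ.id_le N, (hu N).symm ▸ hyP N⟩⟩
  · filter_upwards [eventually_ge_atTop (φ J)] with n hn
    by_cases h : ∃ j, φ j = n
    · obtain ⟨j, rfl⟩ := h
      rw [hu]
      exact hs.antitone (hφ.le_iff_le.1 hn) (hys j)
    · rw [Function.extend_apply' _ _ _ h]
      exact ha (hs.mem J)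
  · by_cases h : ∃ j, φ j = n
    · obtain ⟨j, rfl⟩ := h
      exact .inr ((hu j).symm ▸ hyP j)
    · exact .inl (Function.extend_apply' _ _ _ h)

section TailSuperlevelSet

variable {Z : Type*}

def tailSuperlevelSet (K : ℕ → Set Z) (g : ℕ → Z → ℝ≥0∞) (t : ℝ≥0∞) (k : ℕ) : Set Z :=
  {y | ∀ n ≥ k, y ∈ K n → t ≤ g n y}

theorem tailSuperlevelSet_mono (K : ℕ → Set Z) (g : ℕ → Z → ℝ≥0∞) (t : ℝ≥0∞) :
    Monotone (tailSuperlevelSet K g t) :=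
  fun _ _ hkl _ hy n hn => hy n (hkl.trans hn)

theorem exists_seq_tendsto_frequently_lt_of_notMem_interior [TopologicalSpace Z]
    {K : ℕ → Set Z} {T : Set Z} [FirstCountableTopology T] (hKT : ∀ n, K n ⊆ T)
    {g : ℕ → Z → ℝ≥0∞} {t : ℝ≥0∞} {x : Z} (hxK : x ∈ ⋂ n, K n)
    (hx : ∀ k, x ∉ interior (tailSuperlevelSet K g t k)) :
    ∃ u : ℕ → Z, (∀ n, u n ∈ K n) ∧ Tendsto u atTop (𝓝 x) ∧ ∃ᶠ n in atTop, g n (u n) < t := by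
  have hxT : x ∈ T := hKT 0 (mem_iInter.1 hxK 0)
  have : (𝓝[T] x).IsCountablyGenerated := by
    rw [← map_nhds_subtype_val ⟨x, hxT⟩]
    infer_instance
  obtain ⟨u, hu, hPu, hfreq⟩ := exists_seq_tendsto_and_frequently (l := 𝓝[T] x)
    (P := fun n y => y ∈ K n ∧ g n y < t) (pure_le_nhdsWithin hxT) fun s hs => by
      by_contra hcon
      obtain ⟨k, hk⟩ := eventually_atTop.1 (not_frequently.1 hcon)
      refine hx k (mem_interior_iff_mem_nhds.2 ?_)
      filter_upwards [mem_inf_principal.1 hs] with y hy n hn hyn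
      simpa using fun h => hk n hn ⟨y, hy (hKT n hyn), hyn, h⟩
  refine ⟨u, fun n => ?_, hu.mono_right nhdsWithin_le_nhds, hfreq.mono fun n h => h.2⟩
  rcases hPu n with h | h
  · exact h ▸ mem_iInter.1 hxK n
  · exact h.1

end TailSuperlevelSet

section LevelSetEstimate

variable {Z : Type*} [TopologicalSpace Z] {K : ℕ → Set Z}

def liminfDefectSet (K : ℕ → Set Z) (Fn : ℕ → Z → EReal) (F : Z → EReal) : Set Z :=
  {x | x ∈ ⋂ n, K n ∧ ∃ u : ℕ → Z, (∀ n, u n ∈ K n) ∧ Tendsto u atTop (𝓝 x) ∧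
    atTop.liminf (fun n => Fn n (u n)) < F x}

theorem iInter_inter_setOf_lt_abs_subset [FirstCountableTopology (K 0)] (hanti : Antitone K)
    {Fn : ℕ → Z → EReal} {F : Z → EReal} (hFn : ∀ n x, 0 ≤ Fn n x) (hF : ∀ x, 0 ≤ F x)
    (t : ℝ≥0∞) :
    (⋂ n, K n) ∩ {x | t < (F x).abs} ⊆ liminfDefectSet K Fn F ∪
      ⋃ k, interior (tailSuperlevelSet K (fun n y => (Fn n y).abs) t k) := by
  rintro x ⟨hxK, hxt⟩
  by_contra hx
  simp only [mem_union, mem_iUnion, not_or, not_exists] at hx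
  obtain ⟨u, huK, hux, hfreq⟩ :=
    exists_seq_tendsto_frequently_lt_of_notMem_interior (fun n => hanti (Nat.zero_le n)) hxK hx.2
  refine hx.1 ⟨hxK, u, huK, hux, ?_⟩
  calc atTop.liminf (fun n => Fn n (u n)) ≤ (t : EReal) :=
        liminf_le_of_frequently_le' <| hfreq.mono fun n h => by
          rw [← EReal.coe_abs_of_nonneg (hFn n (u n))]
          exact EReal.coe_ennreal_le_coe_ennreal_iff.2 h.le
    _ < F x := by
        rw [← EReal.coe_abs_of_nonneg (hF x)]
        exact EReal.coe_ennreal_lt_coe_ennreal_iff.2 hxt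

variable [MeasurableSpace Z] {μ : Measure Z} {μs : ℕ → Measure Z} {c : ℝ≥0∞}
  (hopen : ∀ G, IsOpen G → μ G ≤ atTop.liminf fun n => μs n G)
include hopen

theorem measure_compl_iInter_le (hK : ∀ n, IsClosed (K n)) (hanti : Antitone K)
    (hμsK : ∀ n, μs n (K n)ᶜ ≤ c) : μ (⋂ n, K n)ᶜ ≤ c := by
  rw [compl_iInter, Monotone.measure_iUnion fun m n hmn => compl_subset_compl.2 (hanti hmn)]
  refine iSup_le fun n => (hopen _ (hK n).isOpen_compl).trans ?_
  refine liminf_le_of_frequently_le' (frequently_atTop.2 fun m => ⟨max m n, le_max_left _ _, ?_⟩)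
  exact (measure_mono (compl_subset_compl.2 (hanti (le_max_right m n)))).trans (hμsK _)

theorem measure_interior_tailSuperlevelSet_le (hμsK : ∀ n, μs n (K n)ᶜ ≤ c)
    (g : ℕ → Z → ℝ≥0∞) (t : ℝ≥0∞) (k : ℕ) :
    μ (interior (tailSuperlevelSet K g t k)) ≤
      (atTop.liminf fun n => μs n {y | t ≤ g n y}) + c := by
  have hsub (n : ℕ) (hn : k ≤ n) :
      interior (tailSuperlevelSet K g t k) ⊆ {y | t ≤ g n y} ∪ (K n)ᶜ := fun y hy => by
    by_cases hyK : y ∈ K n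
    · exact .inl (interior_subset hy n hn hyK)
    · exact .inr hyK
  calc μ (interior (tailSuperlevelSet K g t k))
      ≤ atTop.liminf (fun n => μs n (interior (tailSuperlevelSet K g t k))) :=
        hopen _ isOpen_interior
    _ ≤ atTop.liminf (fun n => μs n {y | t ≤ g n y} + c) := by
        refine liminf_le_liminf (eventually_atTop.2 ⟨k, fun n hn => ?_⟩)
        exact (measure_mono (hsub n hn)).trans
          ((measure_union_le _ _).trans (by gcongr; exact hμsK n))
    _ = (atTop.liminf fun n => μs n {y | t ≤ g n y}) + c :=
        liminf_add_const _ _ _ (by isBoundedDefault) (by isBoundedDefault)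

theorem measure_setOf_lt_abs_le_liminf_add [FirstCountableTopology (K 0)]
    (hK : ∀ n, IsClosed (K n)) (hanti : Antitone K) (hμsK : ∀ n, μs n (K n)ᶜ ≤ c)
    {Fn : ℕ → Z → EReal} {F : Z → EReal} (hFn : ∀ n x, 0 ≤ Fn n x) (hF : ∀ x, 0 ≤ F x)
    (hD : μ (liminfDefectSet K Fn F) = 0) (t : ℝ≥0∞) :
    μ {x | t < (F x).abs} ≤ (atTop.liminf fun n => μs n {x | t ≤ (Fn n x).abs}) + c + c := by
  set g : ℕ → Z → ℝ≥0∞ := fun n y => (Fn n y).abs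
  calc μ {x | t < (F x).abs}
      ≤ μ ({x | t < (F x).abs} ∩ ⋂ n, K n) + μ ({x | t < (F x).abs} \ ⋂ n, K n) :=
        measure_le_inter_add_sdiff _ _ _
    _ ≤ μ ((⋂ n, K n) ∩ {x | t < (F x).abs}) + μ (⋂ n, K n)ᶜ := by
        rw [inter_comm]
        gcongr
        exact fun x hx => hx.2
    _ ≤ μ (liminfDefectSet K Fn F ∪ ⋃ k, interior (tailSuperlevelSet K g t k)) + c := by
        gcongr
        · exact iInter_inter_setOf_lt_abs_subset hanti hFn hF t
        · exact measure_compl_iInter_le hopen hK hanti hμsK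
    _ ≤ (⨆ k, μ (interior (tailSuperlevelSet K g t k))) + c := by
        gcongr
        rw [← Monotone.measure_iUnion fun k l hkl =>
          interior_mono (tailSuperlevelSet_mono K g t hkl)]
        exact (measure_union_le _ _).trans (by rw [hD, zero_add])
    _ ≤ (atTop.liminf fun n => μs n {x | t ≤ g n x}) + c + c := by
        gcongr
        exact iSup_le (measure_interior_tailSuperlevelSet_le hopen hμsK g t)

end LevelSetEstimate

theorem portmanteau_liminf_general {Z : Type*} [TopologicalSpace Z] [CompletelyRegularSpace Z]
    [MeasurableSpace Z] [BorelSpace Z]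
    (μn : ℕ → Measure Z) (μ : Measure Z)
    (hμn : ∀ n, IsProbabilityMeasure (μn n)) (hμ : IsProbabilityMeasure μ)
    (hRadon : μ.InnerRegular)
    (hweak : ∀ f : BoundedContinuousFunction Z ℝ,
      Tendsto (fun n => ∫ x, f x ∂(μn n)) atTop (nhds (∫ x, f x ∂μ)))
    (K : ℝ → ℕ → Set Z)
    (hKclosed : ∀ r > (0 : ℝ), ∀ n, IsClosed (K r n))
    (hKmetr : ∀ r > (0 : ℝ), ∀ n, TopologicalSpace.MetrizableSpace (K r n))
    (hKanti : ∀ r > (0 : ℝ), Antitone (K r))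
    (hKmeas : ∀ r > (0 : ℝ), ∀ n, ENNReal.ofReal (1 - r) ≤ μn n (K r n))
    (Fn : ℕ → Z → EReal) (F : Z → EReal)
    (hFnmeas : ∀ r > (0 : ℝ), ∀ n m, Measurable fun x : K r n => Fn m (x : Z))
    (hFmeas : ∀ r > (0 : ℝ), ∀ n, Measurable fun x : K r n => F (x : Z)) :
    ((∀ n, NullMeasurable (Fn n) (μn n)) ∧ NullMeasurable F μ) ∧
    ((∀ n x, 0 ≤ Fn n x) → (∀ x, 0 ≤ F x) →
      (∀ r ∈ Set.Ioo (0 : ℝ) 1,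
        μ {x | x ∈ ⋂ n, K r n ∧ ∃ u : ℕ → Z, (∀ n, u n ∈ K r n) ∧
            Tendsto u atTop (nhds x) ∧
            Filter.atTop.liminf (fun n => Fn n (u n)) < F x} = 0) →
      ∫⁻ x, (F x).abs ∂μ ≤
        Filter.atTop.liminf fun n => ∫⁻ x, (Fn n x).abs ∂(μn n)) := by
  let P : ProbabilityMeasure Z := ⟨μ, hμ⟩
  have : (P : Measure Z).InnerRegular := hRadon
  let Ps : ℕ → ProbabilityMeasure Z := fun n => ⟨μn n, hμn n⟩
  have hP : Tendsto Ps atTop (𝓝 P) :=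
    ProbabilityMeasure.tendsto_iff_forall_integral_tendsto.2 hweak
  have hopen (G : Set Z) (hG : IsOpen G) : μ G ≤ atTop.liminf fun n => μn n G :=
    ProbabilityMeasure.le_liminf_measure_open_of_tendsto_of_completelyRegular hP hG
  have hμnK (r : ℝ) (hr : 0 < r) (n : ℕ) : μn n (K r n)ᶜ ≤ ENNReal.ofReal r :=
    measure_compl_le_ofReal_of_ofReal_one_sub_le (hKclosed r hr n).measurableSet (hKmeas r hr n)
  have hμK (r : ℝ) (hr : 0 < r) : μ (⋂ n, K r n)ᶜ ≤ ENNReal.ofReal r :=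
    measure_compl_iInter_le hopen (hKclosed r hr) (hKanti r hr) (hμnK r hr)
  have hFn (n : ℕ) : NullMeasurable (Fn n) (μn n) :=
    nullMeasurable_of_forall_exists_measurable_restrict fun r hr =>
      ⟨K r n, (hKclosed r hr n).measurableSet, hμnK r hr n, hFnmeas r hr n n⟩
  have hF : NullMeasurable F μ :=
    nullMeasurable_of_forall_exists_measurable_restrict fun r hr =>
      ⟨K r 0, (hKclosed r hr 0).measurableSet,
        (measure_mono (compl_subset_compl.2 (iInter_subset _ 0))).trans (hμK r hr), hFmeas r hr 0⟩
  refine ⟨⟨hFn, hF⟩, fun hFn0 hF0 hD => ?_⟩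
  refine lintegral_le_liminf_lintegral_of_measure_lt_le_liminf
    (EReal.measurable_abs.comp_aemeasurable hF.aemeasurable)
    (fun n => EReal.measurable_abs.comp_aemeasurable (hFn n).aemeasurable) fun t => ?_
  refine ENNReal.le_of_forall_lt_one_le_add fun r hr0 hr1 => ?_
  have hr2 : r / 2 ∈ Ioo (0 : ℝ) 1 := ⟨half_pos hr0, by linarith⟩
  have := hKmetr (r / 2) hr2.1 0
  have := measure_setOf_lt_abs_le_liminf_add hopen (hKclosed _ hr2.1) (hKanti _ hr2.1)
    (hμnK _ hr2.1) hFn0 hF0 (hD _ hr2) t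
  rwa [add_assoc, ← ENNReal.ofReal_add hr2.1.le hr2.1.le, add_halves] at this

/-- Portmanteau-type theorem, part 1. Let `Z` be completely regular, `μ_n, μ` Radon
probability measures with `μ_n → μ` weakly, and `K_{r,n}` closed metrizable sets,
decreasing in `n`, with `μ_n(K_{r,n}) ≥ 1 - r` and `K_{r,∞} = ⋂_n K_{r,n}`. If
`F_n, F : Z → [-∞,∞]` have Borel measurable restrictions to every `K_{r,n}`, then each
`F_n` is `μ_n`-measurable and `F` is `μ`-measurable, and if moreover `F_n, F ≥ 0` and the
exceptional sets `D_r` are `μ`-outer-null, then `∫ F dμ ≤ liminf ∫ F_n dμ_n`. -/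
theorem portmanteau_liminf {Z : Type*} [TopologicalSpace Z] [CompletelyRegularSpace Z]
    [MeasurableSpace Z] [BorelSpace Z]
    (μn : ℕ → Measure Z) (μ : Measure Z)
    (hμn : ∀ n, IsProbabilityMeasure (μn n)) (hμ : IsProbabilityMeasure μ)
    (hRadonn : ∀ n, (μn n).InnerRegular) (hRadon : μ.InnerRegular)
    (hweak : ∀ f : BoundedContinuousFunction Z ℝ,
      Tendsto (fun n => ∫ x, f x ∂(μn n)) atTop (nhds (∫ x, f x ∂μ)))
    (K : ℝ → ℕ → Set Z)
    (hKclosed : ∀ r > (0 : ℝ), ∀ n, IsClosed (K r n))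
    (hKmetr : ∀ r > (0 : ℝ), ∀ n, TopologicalSpace.MetrizableSpace (K r n))
    (hKanti : ∀ r > (0 : ℝ), Antitone (K r))
    (hKmeas : ∀ r > (0 : ℝ), ∀ n, ENNReal.ofReal (1 - r) ≤ μn n (K r n))
    (Fn : ℕ → Z → EReal) (F : Z → EReal)
    (hFnmeas : ∀ r > (0 : ℝ), ∀ n m, Measurable fun x : K r n => Fn m (x : Z))
    (hFmeas : ∀ r > (0 : ℝ), ∀ n, Measurable fun x : K r n => F (x : Z)) :
    ((∀ n, NullMeasurable (Fn n) (μn n)) ∧ NullMeasurable F μ) ∧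
    ((∀ n x, 0 ≤ Fn n x) → (∀ x, 0 ≤ F x) →
      (∀ r ∈ Set.Ioo (0 : ℝ) 1,
        μ {x | x ∈ ⋂ n, K r n ∧ ∃ u : ℕ → Z, (∀ n, u n ∈ K r n) ∧
            Tendsto u atTop (nhds x) ∧
            Filter.atTop.liminf (fun n => Fn n (u n)) < F x} = 0) →
      ∫⁻ x, (F x).abs ∂μ ≤
        Filter.atTop.liminf fun n => ∫⁻ x, (Fn n x).abs ∂(μn n)) :=
  portmanteau_liminf_general μn μ hμn hμ hRadon hweak K hKclosed hKmetr hKanti hKmeas Fn F hFnmeas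
    hFmeas
end

section
/- Let f : [0,T] → Y be continuous and affine on every interval [t_{i−1}, t_i], i = 1,…,N. Then for every s ∈ (0,1) and p ∈ [1,∞], [f]_{B^s_{p,∞}} ≤ 3 max_{1 ≤ i < N} f_{i,p} / t_i^{s}. -/
/-!
Write `h = iτ + r` with `0 ≤ r < τ` and split
`f(u + h) - f(u) = [g_i(u + r)] + [f(u + r) - f(u)]` with `g_i = f(· + iτ) - f`.
The function `g_i` is again affine on the cells, and on each cell `‖·‖^p` of an affine function
is dominated by the linear interpolation of its endpoint values, so the first term is bounded
by `f_{i,p}`. A step `r ≤ τ` crosses at most one node, so the second term is at most `r/τ` times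
one of the two adjacent increments `f(t_{k+1}) - f(t_k)`, which gives `2 (r/τ) f_{1,p}`.
It remains to note `h^{-s} ≤ t_i^{-s}` and `h^{-s} r/τ ≤ τ^{-s}`.
-/

open Filter Topology Set MeasureTheory ENNReal NNReal

noncomputable section

/-- The quantity `f_{i,p}` of the paper: for `p < ∞`,
`f_{i,p} = (τ Σ_{j=i}^N ‖f(t_j) - f(t_{j-i})‖^p)^{1/p}` and
`f_{i,∞} = max_{i ≤ j ≤ N} ‖f(t_j) - f(t_{j-i})‖`, with `t_j = j·τ`. -/
def discreteDiffNorm {Y : Type*} [NormedAddCommGroup Y] (f : ℝ → Y) (τ : ℝ) (N i : ℕ)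
    (p : ℝ≥0∞) : ℝ≥0∞ :=
  if p = ⊤ then
    ((Finset.Icc i N).sup fun j => ‖f ((j : ℝ) * τ) - f (((j - i : ℕ) : ℝ) * τ)‖₊ : ℝ≥0)
  else
    (ENNReal.ofReal τ * ∑ j ∈ Finset.Icc i N,
        (‖f ((j : ℝ) * τ) - f (((j - i : ℕ) : ℝ) * τ)‖₊ : ℝ≥0∞) ^ p.toReal) ^
      (1 / p.toReal)

/-- The Besov seminorm with `q = ∞`:
`[f]_{B^s_{p,∞}} = sup_{0<h<T} h^{-s} ‖u ↦ f(u+h) - f(u)‖_{L^p(0,T-h;Y)}`. -/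
def besovSeminormTop {Y : Type*} [NormedAddCommGroup Y] (f : ℝ → Y) (T s : ℝ)
    (p : ℝ≥0∞) : ℝ≥0∞ :=
  ⨆ h ∈ Set.Ioo (0 : ℝ) T, ENNReal.ofReal (h ^ (-s)) *
    eLpNorm (fun u => f (u + h) - f u) p
      (MeasureTheory.volume.restrict (Set.Ioo (0 : ℝ) (T - h)))

theorem exists_mem_Ico_nat_mul {τ u : ℝ} (hτ : 0 < τ) {n : ℕ} (hu : u ∈ Ico 0 (n * τ)) :
    ∃ k < n, u ∈ Ico (k * τ) ((k + 1) * τ) := by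
  have hu' : 0 ≤ u / τ := div_nonneg hu.1 hτ.le
  refine ⟨⌊u / τ⌋₊, (Nat.floor_lt hu').2 ((div_lt_iff₀ hτ).2 hu.2), ?_, ?_⟩
  · exact (le_div_iff₀ hτ).1 (Nat.floor_le hu')
  · exact (div_lt_iff₀ hτ).1 (Nat.lt_floor_add_one _)

theorem div_mem_Icc_of_mem_Icc {τ u : ℝ} (hτ : 0 < τ) {k : ℕ}
    (hu : u ∈ Icc (k * τ) ((k + 1) * τ)) : (u - k * τ) / τ ∈ Icc 0 1 :=
  ⟨div_nonneg (by linarith [hu.1]) hτ.le, (div_le_one hτ).2 (by linarith [hu.2])⟩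

theorem lintegral_Ico_eq_sum (μ : Measure ℝ) (F : ℝ → ℝ≥0∞) {c : ℕ → ℝ} (hc : Monotone c)
    (n : ℕ) : ∫⁻ u in Ico (c 0) (c n), F u ∂μ =
      ∑ k ∈ Finset.range n, ∫⁻ u in Ico (c k) (c (k + 1)), F u ∂μ := by
  induction n with
  | zero => simp
  | succ n ih =>
    rw [Finset.sum_range_succ, ← ih, ← lintegral_union measurableSet_Ico
      Ico_disjoint_Ico_same, Ico_union_Ico_eq_Ico (hc n.zero_le) (hc n.le_succ)]

theorem lintegral_Ico_nat_mul_eq_sum (μ : Measure ℝ) (F : ℝ → ℝ≥0∞) {τ : ℝ} (hτ : 0 ≤ τ)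
    (n : ℕ) : ∫⁻ u in Ico 0 (n * τ), F u ∂μ =
      ∑ k ∈ Finset.range n, ∫⁻ u in Ico (k * τ) ((k + 1) * τ), F u ∂μ := by
  simpa using lintegral_Ico_eq_sum μ F (c := fun k : ℕ => (k : ℝ) * τ)
    (fun a b hab => mul_le_mul_of_nonneg_right (Nat.cast_le.2 hab) hτ) n

theorem setLIntegral_le_sum_of_le_on_cells {F : ℝ → ℝ≥0∞} {τ : ℝ} (hτ : 0 ≤ τ) {n : ℕ}
    {S : Set ℝ} (hS_meas : MeasurableSet S) (hS : S ⊆ Ico 0 (n * τ)) {B : ℕ → ℝ≥0∞}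
    (hB : ∀ k < n, ∀ u ∈ Ico (k * τ) ((k + 1) * τ) ∩ S, F u ≤ B k) :
    ∫⁻ u in S, F u ≤ ENNReal.ofReal τ * ∑ k ∈ Finset.range n, B k := by
  have h_cells := lintegral_Ico_nat_mul_eq_sum (volume.restrict S) F hτ n
  simp only [Measure.restrict_restrict measurableSet_Ico, inter_eq_right.2 hS] at h_cells
  rw [h_cells, Finset.mul_sum]
  refine Finset.sum_le_sum fun k hk => ?_
  calc ∫⁻ u in Ico (k * τ) ((k + 1) * τ) ∩ S, F u
      ≤ ∫⁻ _ in Ico (k * τ) ((k + 1) * τ) ∩ S, B k :=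
        setLIntegral_mono' (measurableSet_Ico.inter hS_meas) (hB k (Finset.mem_range.1 hk))
    _ ≤ ∫⁻ _ in Ico (k * τ) ((k + 1) * τ), B k := lintegral_mono_set inter_subset_left
    _ = ENNReal.ofReal τ * B k := by
        rw [setLIntegral_const, Real.volume_Ico, mul_comm]
        ring_nf

theorem setLIntegral_Ico_ofReal_affine {A B : ℝ} (hA : 0 ≤ A) (hB : 0 ≤ B) (x : ℝ) {τ : ℝ}
    (hτ : 0 < τ) :
    ∫⁻ u in Ico x (x + τ), ENNReal.ofReal ((1 - (u - x) / τ) * A + (u - x) / τ * B) =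
      ENNReal.ofReal (τ / 2 * (A + B)) := by
  have h_int : ∫ u in x..x + τ, (1 - (u - x) / τ) * A + (u - x) / τ * B = τ / 2 * (A + B) := by
    rw [intervalIntegral.integral_comp_sub_right (fun v => (1 - v / τ) * A + v / τ * B)]
    have h_lin : ∀ v : ℝ, (1 - v / τ) * A + v / τ * B = A + (B - A) / τ * v := fun v => by
      field_simp; ring
    simp only [sub_self, add_sub_cancel_left, h_lin]
    rw [intervalIntegral.integral_add intervalIntegrable_const
      (intervalIntegral.intervalIntegrable_id.const_mul _), intervalIntegral.integral_const_mul,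
      integral_id]
    simp only [intervalIntegral.integral_const, sub_zero, smul_eq_mul, ne_eq,
      OfNat.ofNat_ne_zero, not_false_eq_true, zero_pow]
    field_simp
    ring
  rw [setLIntegral_congr Ico_ae_eq_Ioc, ← h_int, intervalIntegral.integral_of_le (by linarith),
    ofReal_integral_eq_lintegral_ofReal]
  · exact (by fun_prop : Continuous _).integrableOn_Ioc
  · filter_upwards [ae_restrict_mem measurableSet_Ioc] with u hu
    have ht₀ : 0 ≤ (u - x) / τ := div_nonneg (by linarith [hu.1]) hτ.le
    have ht₁ : (u - x) / τ ≤ 1 := (div_le_one hτ).2 (by linarith [hu.2])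
    exact add_nonneg (mul_nonneg (by linarith) hA) (mul_nonneg ht₀ hB)

theorem sum_range_add_succ_le (G : ℕ → ℝ≥0∞) (n : ℕ) :
    ∑ k ∈ Finset.range n, (G k + G (k + 1)) ≤ 2 * ∑ k ∈ Finset.range (n + 1), G k := by
  rw [Finset.sum_add_distrib, two_mul]
  gcongr
  · exact n.le_succ
  · rw [Finset.sum_range_succ']
    exact le_add_right le_rfl

theorem rpow_neg_mul_div_le {h r τ s : ℝ} (hτ : 0 < τ) (hr : 0 ≤ r) (hrh : r ≤ h) (hrτ : r ≤ τ)
    (hs₀ : 0 ≤ s) (hs₁ : s ≤ 1) : h ^ (-s) * (r / τ) ≤ τ ^ (-s) := by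
  rcases hr.eq_or_lt with rfl | hr
  · simpa using Real.rpow_nonneg hτ.le _
  calc h ^ (-s) * (r / τ) ≤ r ^ (-s) * (r / τ) :=
        mul_le_mul_of_nonneg_right (Real.rpow_le_rpow_of_nonpos hr hrh (neg_nonpos.2 hs₀))
          (by positivity)
    _ = r ^ (1 - s) / τ := by rw [Real.rpow_sub hr, Real.rpow_one, Real.rpow_neg hr.le]; ring
    _ ≤ τ ^ (1 - s) / τ := by gcongr
    _ = τ ^ (-s) := by
        rw [Real.rpow_sub hτ, Real.rpow_one, Real.rpow_neg hτ.le]; field_simp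

theorem ofReal_rpow_neg_mul_le_sup {X : ℕ → ℝ≥0∞} (hX : X 0 = 0) {τ s h : ℝ} (hτ : 0 < τ)
    (hs : 0 ≤ s) {i n : ℕ} (hin : i ≤ n) (hih : i * τ ≤ h) :
    ENNReal.ofReal (h ^ (-s)) * X i ≤
      (Finset.Icc 1 n).sup fun j => X j / ENNReal.ofReal ((j * τ) ^ s) := by
  rcases i.eq_zero_or_pos with rfl | hi
  · simp [hX]
  have hiτ : 0 < (i : ℝ) * τ := by positivity
  calc ENNReal.ofReal (h ^ (-s)) * X i ≤ ENNReal.ofReal (((i : ℝ) * τ) ^ (-s)) * X i :=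
        mul_le_mul_left (ENNReal.ofReal_le_ofReal
          (Real.rpow_le_rpow_of_nonpos hiτ hih (neg_nonpos.2 hs))) _
    _ = X i / ENNReal.ofReal ((i * τ) ^ s) := by
        rw [Real.rpow_neg hiτ.le, ENNReal.ofReal_inv_of_pos (by positivity), div_eq_mul_inv,
          mul_comm]
    _ ≤ _ := Finset.le_sup (f := fun j : ℕ => X j / ENNReal.ofReal ((j * τ) ^ s))
        (Finset.mem_Icc.2 ⟨hi, hin⟩)

theorem ofReal_rpow_neg_mul_add_le {X : ℕ → ℝ≥0∞} (hX : X 0 = 0) {τ s h : ℝ} (hτ : 0 < τ)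
    (hs₀ : 0 ≤ s) (hs₁ : s ≤ 1) {i n : ℕ} (hin : i ≤ n) (hn : 1 ≤ n)
    (hh : h ∈ Ico (i * τ) ((i + 1) * τ)) :
    ENNReal.ofReal (h ^ (-s)) * (X i + ENNReal.ofReal ((h - i * τ) / τ) * (2 * X 1)) ≤
      3 * (Finset.Icc 1 n).sup fun j => X j / ENNReal.ofReal ((j * τ) ^ s) := by
  set M := (Finset.Icc 1 n).sup fun j => X j / ENNReal.ofReal ((j * τ) ^ s)
  have hh₀ : 0 ≤ h := le_trans (by positivity) hh.1
  calc _ = ENNReal.ofReal (h ^ (-s)) * X i +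
        2 * (ENNReal.ofReal (h ^ (-s) * ((h - i * τ) / τ)) * X 1) := by
        rw [ENNReal.ofReal_mul (Real.rpow_nonneg hh₀ _)]
        ring
    _ ≤ M + 2 * M := by
        gcongr
        · exact ofReal_rpow_neg_mul_le_sup hX hτ hs₀ hin hh.1
        · calc _ ≤ ENNReal.ofReal (τ ^ (-s)) * X 1 := by
                gcongr
                exact rpow_neg_mul_div_le hτ (sub_nonneg.2 hh.1) (sub_le_self h (by positivity))
                  (by linarith [hh.2]) hs₀ hs₁
            _ ≤ M := by simpa using ofReal_rpow_neg_mul_le_sup hX hτ hs₀ (i := 1) hn le_rfl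
    _ = 3 * M := by ring

section

variable {Y : Type*} [NormedAddCommGroup Y]

theorem enorm_rpow_eq_ofReal (x : Y) {P : ℝ} (hP : 0 ≤ P) :
    ‖x‖ₑ ^ P = ENNReal.ofReal (‖x‖ ^ P) := by
  rw [← ofReal_norm, ENNReal.ofReal_rpow_of_nonneg (norm_nonneg x) hP]

theorem eLpNorm_comp_add_right_restrict (g : ℝ → Y) (r : ℝ) (s : Set ℝ) (p : ℝ≥0∞) :
    eLpNorm (fun u => g (u + r)) p (volume.restrict s) =
      eLpNorm g p (volume.restrict ((· + r) '' s)) := by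
  rw [← ((measurePreserving_add_right volume r).restrict_image_emb
    (measurableEmbedding_addRight r) s).map_eq,
    (measurableEmbedding_addRight r).eLpNorm_map_measure]
  rfl

theorem ContinuousOn.aestronglyMeasurable_comp_add {f : ℝ → Y} {L : ℝ}
    (hf : ContinuousOn f (Icc 0 L)) {c h : ℝ} (hc : 0 ≤ c) (hch : c ≤ h) :
    AEStronglyMeasurable (fun u => f (u + c)) (volume.restrict (Ioo 0 (L - h))) :=
  (hf.comp (continuous_add_const c).continuousOn fun u hu =>
    ⟨by linarith [hu.1], by linarith [hu.2]⟩).aestronglyMeasurable measurableSet_Ioo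

def gridLpNorm (g : ℝ → Y) (τ : ℝ) (n : ℕ) (p : ℝ≥0∞) : ℝ≥0∞ :=
  if p = ⊤ then (Finset.range (n + 1)).sup fun k => ‖g (k * τ)‖ₑ
  else (ENNReal.ofReal τ * ∑ k ∈ Finset.range (n + 1), ‖g (k * τ)‖ₑ ^ p.toReal) ^ (1 / p.toReal)

theorem discreteDiffNorm_eq_gridLpNorm (f : ℝ → Y) (τ : ℝ) {N i : ℕ} (hi : i ≤ N)
    (p : ℝ≥0∞) :
    discreteDiffNorm f τ N i p = gridLpNorm (fun u => f (u + i * τ) - f u) τ (N - i) p := by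
  have h_Icc : Finset.Icc i N = (Finset.range (N - i + 1)).map (addLeftEmbedding i) := by
    rw [Finset.range_eq_Ico, Finset.map_add_left_Ico, add_zero,
      ← Finset.Ico_add_one_right_eq_Icc]
    congr 1
    omega
  have h_node : ∀ k : ℕ, ((i : ℝ) + k) * τ = k * τ + i * τ := fun k => by ring
  simp only [discreteDiffNorm, gridLpNorm, h_Icc, Finset.sup_map, Finset.sum_map,
    ENNReal.coe_finset_sup]
  simp [h_node, enorm_eq_nnnorm]

theorem discreteDiffNorm_zero (f : ℝ → Y) (τ : ℝ) (N : ℕ)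
    {p : ℝ≥0∞} (hp : p ≠ 0) : discreteDiffNorm f τ N 0 p = 0 := by
  rcases eq_or_ne p ⊤ with rfl | hp_top
  · simp [discreteDiffNorm]
  · simp [discreteDiffNorm, hp_top, ENNReal.toReal_pos hp hp_top]

variable [NormedSpace ℝ Y]

theorem norm_lineMap_le (a b : Y) {t : ℝ} (ht : t ∈ Icc 0 1) :
    ‖AffineMap.lineMap a b t‖ ≤ (1 - t) * ‖a‖ + t * ‖b‖ := by
  rw [AffineMap.lineMap_apply_module]
  refine (norm_add_le _ _).trans_eq ?_
  rw [norm_smul, norm_smul, Real.norm_of_nonneg ht.1, Real.norm_of_nonneg (by linarith [ht.2])]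

theorem enorm_lineMap_le_max (a b : Y) {t : ℝ} (ht : t ∈ Icc 0 1) :
    ‖AffineMap.lineMap a b t‖ₑ ≤ max ‖a‖ₑ ‖b‖ₑ := by
  simp only [← ofReal_norm, ← ENNReal.ofReal_max]
  refine ENNReal.ofReal_le_ofReal ((norm_lineMap_le a b ht).trans ?_)
  nlinarith [le_max_left ‖a‖ ‖b‖, le_max_right ‖a‖ ‖b‖, ht.1, ht.2]

theorem norm_lineMap_rpow_le (a b : Y) {t P : ℝ} (ht : t ∈ Icc 0 1) (hP : 1 ≤ P) :
    ‖AffineMap.lineMap a b t‖ ^ P ≤ (1 - t) * ‖a‖ ^ P + t * ‖b‖ ^ P :=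
  calc ‖AffineMap.lineMap a b t‖ ^ P ≤ ((1 - t) * ‖a‖ + t * ‖b‖) ^ P :=
        Real.rpow_le_rpow (norm_nonneg _) (norm_lineMap_le a b ht) (by linarith)
    _ ≤ (1 - t) * ‖a‖ ^ P + t * ‖b‖ ^ P :=
        (convexOn_rpow hP).2 (norm_nonneg a) (norm_nonneg b) (by linarith [ht.2]) ht.1 (by ring)

theorem setLIntegral_enorm_lineMap_rpow_le (a b : Y) (x : ℝ) {τ P : ℝ} (hτ : 0 < τ)
    (hP : 1 ≤ P) :
    ∫⁻ u in Ico x (x + τ), ‖AffineMap.lineMap a b ((u - x) / τ)‖ₑ ^ P ≤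
      ENNReal.ofReal (τ / 2) * (‖a‖ₑ ^ P + ‖b‖ₑ ^ P) := by
  have hP₀ : 0 ≤ P := by linarith
  calc ∫⁻ u in Ico x (x + τ), ‖AffineMap.lineMap a b ((u - x) / τ)‖ₑ ^ P
      ≤ ∫⁻ u in Ico x (x + τ),
          ENNReal.ofReal ((1 - (u - x) / τ) * ‖a‖ ^ P + (u - x) / τ * ‖b‖ ^ P) := by
        refine setLIntegral_mono' measurableSet_Ico fun u hu => ?_
        rw [enorm_rpow_eq_ofReal _ hP₀]
        refine ENNReal.ofReal_le_ofReal (norm_lineMap_rpow_le a b ⟨?_, ?_⟩ hP)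
        · exact div_nonneg (by linarith [hu.1]) hτ.le
        · exact (div_le_one hτ).2 (by linarith [hu.2])
    _ = ENNReal.ofReal (τ / 2) * (‖a‖ₑ ^ P + ‖b‖ₑ ^ P) := by
        rw [setLIntegral_Ico_ofReal_affine (by positivity) (by positivity) x hτ,
          ENNReal.ofReal_mul (by positivity), ENNReal.ofReal_add (by positivity) (by positivity),
          enorm_rpow_eq_ofReal _ hP₀, enorm_rpow_eq_ofReal _ hP₀]

def AffineOnCells (f : ℝ → Y) (τ : ℝ) (n : ℕ) : Prop :=
  ∀ k < n, ∀ u ∈ Icc (k * τ) ((k + 1) * τ),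
    f u = AffineMap.lineMap (f (k * τ)) (f ((k + 1) * τ)) ((u - k * τ) / τ)

namespace AffineOnCells

variable {f g : ℝ → Y} {τ : ℝ} {n : ℕ}

theorem of_eq_smul_add_smul (hτ : τ ≠ 0)
    (hf : ∀ i : ℕ, 1 ≤ i → i ≤ n → ∀ t : ℝ, ((i : ℝ) - 1) * τ ≤ t → t ≤ (i : ℝ) * τ →
      f t = ((t - ((i : ℝ) - 1) * τ) / τ) • f ((i : ℝ) * τ) +
        (((i : ℝ) * τ - t) / τ) • f (((i : ℝ) - 1) * τ)) :
    AffineOnCells f τ n := by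
  intro k hk u hu
  have h := hf (k + 1) (by omega) hk u (by push_cast; simpa using hu.1) (by push_cast; exact hu.2)
  push_cast at h
  rw [h, AffineMap.lineMap_apply_module, add_sub_cancel_right, add_comm]
  congr 2
  field_simp
  ring

theorem mono (hf : AffineOnCells f τ n) {m : ℕ} (hmn : m ≤ n) : AffineOnCells f τ m :=
  fun k hk => hf k (hk.trans_le hmn)

theorem sub (hf : AffineOnCells f τ n) (hg : AffineOnCells g τ n) :
    AffineOnCells (fun u => f u - g u) τ n := by
  intro k hk u hu
  dsimp only
  rw [hf k hk u hu, hg k hk u hu, ← vsub_eq_sub, AffineMap.lineMap_vsub_lineMap]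
  rfl

theorem comp_add_nat_mul (hf : AffineOnCells f τ n) (i : ℕ) :
    AffineOnCells (fun u => f (u + i * τ)) τ (n - i) := by
  intro k hk u hu
  have h := hf (k + i) (by omega) (u + i * τ) (by push_cast; constructor <;> linarith [hu.1, hu.2])
  push_cast at h
  dsimp only
  rw [h]
  congr 2
  · rw [add_mul]
  · rw [add_right_comm, add_mul _ _ τ]
  · ring

theorem norm_sub_eq (hf : AffineOnCells f τ n) (hτ : 0 < τ) {k : ℕ} (hk : k < n) {x y : ℝ}
    (hx : x ∈ Icc (k * τ) ((k + 1) * τ)) (hy : y ∈ Icc (k * τ) ((k + 1) * τ)) :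
    ‖f x - f y‖ = |x - y| / τ * ‖f ((k + 1) * τ) - f (k * τ)‖ := by
  rw [← dist_eq_norm, ← dist_eq_norm, hf k hk x hx, hf k hk y hy, dist_lineMap_lineMap,
    dist_comm (f ((k + 1) * τ)), Real.dist_eq, div_sub_div_same, sub_sub_sub_cancel_right,
    abs_div, abs_of_pos hτ]

theorem enorm_le_of_forall_le (hf : AffineOnCells f τ n) (hτ : 0 < τ) {C : ℝ≥0∞}
    (hC : ∀ k ≤ n, ‖f (k * τ)‖ₑ ≤ C) {u : ℝ} (hu : u ∈ Ico 0 (n * τ)) : ‖f u‖ₑ ≤ C := by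
  obtain ⟨k, hk, hku⟩ := exists_mem_Ico_nat_mul hτ hu
  rw [hf k hk u (Ico_subset_Icc_self hku)]
  refine (enorm_lineMap_le_max _ _ (div_mem_Icc_of_mem_Icc hτ (Ico_subset_Icc_self hku))).trans
    (max_le (hC k hk.le) ?_)
  exact_mod_cast hC (k + 1) hk

theorem lintegral_enorm_rpow_le (hf : AffineOnCells f τ n) (hτ : 0 < τ) {P : ℝ} (hP : 1 ≤ P) :
    ∫⁻ u in Ico 0 (n * τ), ‖f u‖ₑ ^ P ≤
      ENNReal.ofReal τ * ∑ k ∈ Finset.range (n + 1), ‖f (k * τ)‖ₑ ^ P := by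
  rw [lintegral_Ico_nat_mul_eq_sum volume _ hτ.le]
  calc ∑ k ∈ Finset.range n, ∫⁻ u in Ico (k * τ) ((k + 1) * τ), ‖f u‖ₑ ^ P
      ≤ ∑ k ∈ Finset.range n,
          ENNReal.ofReal (τ / 2) * (‖f (k * τ)‖ₑ ^ P + ‖f ((k + 1 : ℕ) * τ)‖ₑ ^ P) := by
        refine Finset.sum_le_sum fun k hk => ?_
        rw [Finset.mem_range] at hk
        rw [setLIntegral_congr_fun measurableSet_Ico fun u hu => by
          rw [hf k hk u (Ico_subset_Icc_self hu)]]
        push_cast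
        simpa only [add_one_mul] using
          setLIntegral_enorm_lineMap_rpow_le (f (k * τ)) (f ((k + 1) * τ)) (k * τ) hτ hP
    _ ≤ ENNReal.ofReal (τ / 2) * (2 * ∑ k ∈ Finset.range (n + 1), ‖f (k * τ)‖ₑ ^ P) := by
        rw [← Finset.mul_sum]
        exact mul_le_mul_right (sum_range_add_succ_le (fun k => ‖f (k * τ)‖ₑ ^ P) n) _
    _ = ENNReal.ofReal τ * ∑ k ∈ Finset.range (n + 1), ‖f (k * τ)‖ₑ ^ P := by
        rw [← mul_assoc, ← ENNReal.ofReal_ofNat 2, ← ENNReal.ofReal_mul (by positivity)]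
        ring_nf


theorem eLpNorm_le_gridLpNorm (hf : AffineOnCells f τ n) (hτ : 0 < τ) {p : ℝ≥0∞} (hp : 1 ≤ p) :
    eLpNorm f p (volume.restrict (Ico 0 (n * τ))) ≤ gridLpNorm f τ n p := by
  rw [gridLpNorm]
  split_ifs with hp_top
  · rw [hp_top, eLpNorm_exponent_top]
    refine eLpNormEssSup_le_of_ae_enorm_bound (ae_restrict_of_forall_mem measurableSet_Ico
      fun u hu => hf.enorm_le_of_forall_le hτ (fun k hk => ?_) hu)
    exact Finset.le_sup (f := fun k : ℕ => ‖f (k * τ)‖ₑ) (Finset.mem_range.2 (by omega))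
  · have hP : 1 ≤ p.toReal := by simpa using ENNReal.toReal_mono hp_top hp
    rw [eLpNorm_eq_lintegral_rpow_enorm_toReal (by positivity) hp_top]
    gcongr
    exact hf.lintegral_enorm_rpow_le hτ hP

theorem eLpNorm_comp_add_le_gridLpNorm (hf : AffineOnCells f τ n) (hτ : 0 < τ) {p : ℝ≥0∞}
    (hp : 1 ≤ p) {r L : ℝ} (hr : 0 ≤ r) (hL : L + r ≤ n * τ) :
    eLpNorm (fun u => f (u + r)) p (volume.restrict (Ioo 0 L)) ≤ gridLpNorm f τ n p := by
  rw [eLpNorm_comp_add_right_restrict, image_add_const_Ioo, zero_add]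
  refine (eLpNorm_mono_measure _ (Measure.restrict_mono ?_ le_rfl)).trans
    (hf.eLpNorm_le_gridLpNorm hτ hp)
  exact fun u hu => ⟨hr.trans hu.1.le, hu.2.trans_le hL⟩

theorem exists_norm_sub_le (hf : AffineOnCells f τ n) (hτ : 0 < τ) {r : ℝ} (hr₀ : 0 ≤ r)
    (hrτ : r ≤ τ) {k : ℕ} (hk : k < n) {u : ℝ} (hu : u ∈ Icc (k * τ) ((k + 1) * τ))
    (hur : u + r ≤ n * τ) :
    ∃ j < n, (j = k ∨ j = k + 1) ∧ ‖f (u + r) - f u‖ ≤ r / τ * ‖f ((j + 1) * τ) - f (j * τ)‖ := by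
  by_cases h_same : u + r ≤ (k + 1) * τ
  · refine ⟨k, hk, .inl rfl, le_of_eq ?_⟩
    rw [hf.norm_sub_eq hτ hk ⟨by linarith [hu.1], h_same⟩ hu, add_sub_cancel_left,
      abs_of_nonneg hr₀]
  push Not at h_same
  have hk₁ : k + 1 < n := by
    have h : ((k + 1 : ℕ) : ℝ) * τ < n * τ := by push_cast; linarith
    exact_mod_cast lt_of_mul_lt_mul_right h hτ.le
  set c : ℝ := (k + 1) * τ
  have h_right : ‖f (u + r) - f c‖ = (u + r - c) / τ * ‖f (((k : ℝ) + 1 + 1) * τ) - f c‖ := by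
    rw [hf.norm_sub_eq hτ hk₁ (by push_cast; constructor <;> linarith [hu.2])
      (by push_cast; constructor <;> linarith), abs_of_nonneg (by linarith), Nat.cast_succ]
  have h_left : ‖f c - f u‖ = (c - u) / τ * ‖f c - f (k * τ)‖ := by
    rw [hf.norm_sub_eq hτ hk ⟨by linarith [hu.1], le_rfl⟩ hu, abs_of_nonneg (by linarith [hu.2])]
  have h_bound : ∀ M, ‖f c - f (k * τ)‖ ≤ M → ‖f (((k : ℝ) + 1 + 1) * τ) - f c‖ ≤ M →
      ‖f (u + r) - f u‖ ≤ r / τ * M := fun M h₀ h₁ =>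
    calc ‖f (u + r) - f u‖ ≤ ‖f (u + r) - f c‖ + ‖f c - f u‖ :=
          norm_sub_le_norm_sub_add_norm_sub _ _ _
      _ ≤ (u + r - c) / τ * M + (c - u) / τ * M := by
          rw [h_right, h_left]
          gcongr
          exact div_nonneg (by linarith [hu.2]) hτ.le
      _ = r / τ * M := by ring
  rcases le_total ‖f c - f (k * τ)‖ ‖f (((k : ℝ) + 1 + 1) * τ) - f c‖ with h | h
  · refine ⟨k + 1, hk₁, .inr rfl, ?_⟩
    rw [Nat.cast_succ]
    exact h_bound _ h le_rfl
  · exact ⟨k, hk, .inl rfl, h_bound _ le_rfl h⟩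

theorem lintegral_enorm_sub_rpow_le (hf : AffineOnCells f τ n) (hτ : 0 < τ) {P : ℝ} (hP : 1 ≤ P)
    {r : ℝ} (hr₀ : 0 ≤ r) (hrτ : r ≤ τ) :
    ∫⁻ u in Ioo 0 (n * τ - r), ‖f (u + r) - f u‖ₑ ^ P ≤
      ENNReal.ofReal ((r / τ) ^ P) * (2 * (ENNReal.ofReal τ *
        ∑ k ∈ Finset.range n, ‖f ((k + 1) * τ) - f (k * τ)‖ₑ ^ P)) := by
  have hP₀ : 0 ≤ P := by linarith
  -- `E` vanishes past the last cell, which a step from the last cell never reaches.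
  set E : ℕ → ℝ≥0∞ := fun j => if j < n then ‖f ((j + 1) * τ) - f (j * τ)‖ₑ ^ P else 0
  have h_pt : ∀ k < n, ∀ u ∈ Ico (k * τ) ((k + 1) * τ) ∩ Ioo 0 (n * τ - r),
      ‖f (u + r) - f u‖ₑ ^ P ≤ ENNReal.ofReal ((r / τ) ^ P) * (E k + E (k + 1)) := by
    intro k hk u hu
    obtain ⟨j, hj, hjk, hle⟩ := hf.exists_norm_sub_le hτ hr₀ hrτ hk (Ico_subset_Icc_self hu.1)
      (by linarith [hu.2.2])
    have hEj : E j ≤ E k + E (k + 1) := by rcases hjk with rfl | rfl <;> simp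
    calc ‖f (u + r) - f u‖ₑ ^ P
        ≤ ENNReal.ofReal ((r / τ * ‖f ((j + 1) * τ) - f (j * τ)‖) ^ P) := by
          rw [enorm_rpow_eq_ofReal _ hP₀]
          exact ENNReal.ofReal_le_ofReal (Real.rpow_le_rpow (norm_nonneg _) hle hP₀)
      _ = ENNReal.ofReal ((r / τ) ^ P) * E j := by
          rw [Real.mul_rpow (by positivity) (norm_nonneg _), ENNReal.ofReal_mul (by positivity),
            ← enorm_rpow_eq_ofReal _ hP₀]
          simp only [E, if_pos hj]
      _ ≤ _ := by gcongr
  calc ∫⁻ u in Ioo 0 (n * τ - r), ‖f (u + r) - f u‖ₑ ^ P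
      ≤ ENNReal.ofReal τ *
          ∑ k ∈ Finset.range n, ENNReal.ofReal ((r / τ) ^ P) * (E k + E (k + 1)) :=
        setLIntegral_le_sum_of_le_on_cells hτ.le measurableSet_Ioo
          (fun u hu => ⟨hu.1.le, by linarith [hu.2]⟩) h_pt
    _ ≤ ENNReal.ofReal τ *
          (ENNReal.ofReal ((r / τ) ^ P) * (2 * ∑ k ∈ Finset.range (n + 1), E k)) := by
        rw [← Finset.mul_sum]
        gcongr
        exact sum_range_add_succ_le E n
    _ = _ := by
        simp only [E, Finset.sum_range_succ, lt_irrefl, if_false, add_zero]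
        rw [Finset.sum_congr rfl fun k hk => if_pos (Finset.mem_range.1 hk)]
        ring

theorem enorm_sub_le_sup (hf : AffineOnCells f τ n) (hτ : 0 < τ) {r : ℝ} (hr₀ : 0 ≤ r)
    (hrτ : r ≤ τ) {u : ℝ} (hu : u ∈ Ioo 0 (n * τ - r)) :
    ‖f (u + r) - f u‖ₑ ≤
      ENNReal.ofReal (r / τ) * (Finset.range n).sup fun k => ‖f ((k + 1) * τ) - f (k * τ)‖ₑ := by
  obtain ⟨k, hk, hku⟩ := exists_mem_Ico_nat_mul hτ
    (⟨hu.1.le, by linarith [hu.2]⟩ : u ∈ Ico 0 (n * τ))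
  obtain ⟨j, hj, -, hle⟩ := hf.exists_norm_sub_le hτ hr₀ hrτ hk (Ico_subset_Icc_self hku)
    (by linarith [hu.2])
  calc ‖f (u + r) - f u‖ₑ ≤ ENNReal.ofReal (r / τ) * ‖f ((j + 1) * τ) - f (j * τ)‖ₑ := by
        rw [← ofReal_norm, ← ofReal_norm, ← ENNReal.ofReal_mul (by positivity)]
        exact ENNReal.ofReal_le_ofReal hle
    _ ≤ _ := by
        gcongr
        exact Finset.le_sup (f := fun k : ℕ => ‖f ((k + 1) * τ) - f (k * τ)‖ₑ)
          (Finset.mem_range.2 hj)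

theorem eLpNorm_sub_le_gridLpNorm (hf : AffineOnCells f τ n) (hτ : 0 < τ) (hn : 0 < n)
    {p : ℝ≥0∞} (hp : 1 ≤ p) {r : ℝ} (hr₀ : 0 ≤ r) (hrτ : r ≤ τ) :
    eLpNorm (fun u => f (u + r) - f u) p (volume.restrict (Ioo 0 (n * τ - r))) ≤
      ENNReal.ofReal (r / τ) * (2 * gridLpNorm (fun u => f (u + τ) - f u) τ (n - 1) p) := by
  simp only [gridLpNorm, Nat.sub_add_cancel hn, ← add_one_mul]
  split_ifs with hp_top
  · rw [hp_top, eLpNorm_exponent_top]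
    refine eLpNormEssSup_le_of_ae_enorm_bound
      (ae_restrict_of_forall_mem measurableSet_Ioo fun u hu => ?_)
    refine (hf.enorm_sub_le_sup hτ hr₀ hrτ hu).trans ?_
    gcongr
    exact le_mul_of_one_le_left' one_le_two
  · have hP : 1 ≤ p.toReal := by simpa using ENNReal.toReal_mono hp_top hp
    have hP₀ : 0 ≤ 1 / p.toReal := by positivity
    rw [eLpNorm_eq_lintegral_rpow_enorm_toReal (by positivity) hp_top]
    calc _ ≤ (ENNReal.ofReal ((r / τ) ^ p.toReal) * (2 * (ENNReal.ofReal τ *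
            ∑ k ∈ Finset.range n, ‖f ((k + 1) * τ) - f (k * τ)‖ₑ ^ p.toReal))) ^
              (1 / p.toReal) := by
          gcongr
          exact hf.lintegral_enorm_sub_rpow_le hτ hP hr₀ hrτ
      _ = ENNReal.ofReal (r / τ) * (2 ^ (1 / p.toReal) * (ENNReal.ofReal τ *
            ∑ k ∈ Finset.range n, ‖f ((k + 1) * τ) - f (k * τ)‖ₑ ^ p.toReal) ^ (1 / p.toReal)) := by
          rw [ENNReal.mul_rpow_of_nonneg _ _ hP₀, ENNReal.mul_rpow_of_nonneg _ _ hP₀,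
            ENNReal.ofReal_rpow_of_nonneg (by positivity) hP₀, ← Real.rpow_mul (by positivity),
            mul_one_div_cancel (by positivity), Real.rpow_one]
      _ ≤ _ := by
          gcongr
          calc (2 : ℝ≥0∞) ^ (1 / p.toReal) ≤ 2 ^ (1 : ℝ) :=
                ENNReal.rpow_le_rpow_of_exponent_le one_le_two ((div_le_one (by positivity)).2 hP)
            _ = 2 := ENNReal.rpow_one 2

theorem eLpNorm_sub_le_discreteDiffNorm (hf : AffineOnCells f τ n) (hτ : 0 < τ)
    (hcont : ContinuousOn f (Icc 0 (n * τ))) {p : ℝ≥0∞} (hp : 1 ≤ p) {i : ℕ} (hin : i < n)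
    {h : ℝ} (hh : h ∈ Ico (i * τ) ((i + 1) * τ)) :
    eLpNorm (fun u => f (u + h) - f u) p (volume.restrict (Ioo 0 (n * τ - h))) ≤
      discreteDiffNorm f τ n i p +
        ENNReal.ofReal ((h - i * τ) / τ) * (2 * discreteDiffNorm f τ n 1 p) := by
  set r := h - i * τ with hr
  have hr₀ : 0 ≤ r := sub_nonneg.2 hh.1
  have hrτ : r ≤ τ := by linarith [hh.2]
  have hrh : r ≤ h := sub_le_self h (by positivity)
  have h_split : (fun u => f (u + h) - f u) =
      (fun u => f (u + h) - f (u + r)) + fun u => f (u + r) - f u := by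
    funext u
    simp
  have h_shift : (fun u => f (u + h) - f (u + r)) =
      fun u => (fun v => f (v + i * τ) - f v) (u + r) := by
    funext u
    dsimp only
    rw [add_assoc, hr, sub_add_cancel]
  have h_meas : ∀ c, 0 ≤ c → c ≤ h →
      AEStronglyMeasurable (fun u => f (u + c)) (volume.restrict (Ioo 0 (n * τ - h))) :=
    fun c hc hch => hcont.aestronglyMeasurable_comp_add hc hch
  rw [h_split]
  refine (eLpNorm_add_le ((h_meas h (hr₀.trans hrh) le_rfl).sub (h_meas r hr₀ hrh))
    ((h_meas r hr₀ hrh).sub (by simpa using h_meas 0 le_rfl (hr₀.trans hrh))) hp).trans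
    (add_le_add ?_ ?_)
  · change eLpNorm (fun u => f (u + h) - f (u + r)) p _ ≤ _
    rw [h_shift, discreteDiffNorm_eq_gridLpNorm f τ hin.le]
    refine ((hf.comp_add_nat_mul i).sub (hf.mono (n.sub_le i))).eLpNorm_comp_add_le_gridLpNorm
      hτ hp hr₀ ?_
    rw [Nat.cast_sub hin.le]
    linarith
  · rw [discreteDiffNorm_eq_gridLpNorm f τ (by omega : 1 ≤ n)]
    simp only [Nat.cast_one, one_mul]
    exact (eLpNorm_mono_measure _ (Measure.restrict_mono (Ioo_subset_Ioo_right (by linarith))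
      le_rfl)).trans (hf.eLpNorm_sub_le_gridLpNorm hτ (by omega) hp hr₀ hrτ)

end AffineOnCells

end

theorem piecewise_affine_besov_sup_bound_general {Y : Type*} [NormedAddCommGroup Y]
    [NormedSpace ℝ Y] (T : ℝ) (hT : 0 < T) (N : ℕ) (hN : 2 ≤ N)
    (f : ℝ → Y) (hcont : ContinuousOn f (Set.Icc 0 T))
    (haff : ∀ i : ℕ, 1 ≤ i → i ≤ N → ∀ t : ℝ,
      ((i : ℝ) - 1) * (T / N) ≤ t → t ≤ (i : ℝ) * (T / N) →
      f t = ((t - ((i : ℝ) - 1) * (T / N)) / (T / N)) • f ((i : ℝ) * (T / N)) +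
        (((i : ℝ) * (T / N) - t) / (T / N)) • f (((i : ℝ) - 1) * (T / N)))
    (s : ℝ) (hs : s ∈ Set.Ioo (0 : ℝ) 1) (p : ℝ≥0∞) (hp : 1 ≤ p) :
    besovSeminormTop f T s p ≤
      3 * (Finset.Icc 1 (N - 1)).sup
        (fun i => discreteDiffNorm f (T / N) N i p /
          ENNReal.ofReal (((i : ℝ) * (T / N)) ^ s)) := by
  set τ := T / N
  have hN₀ : (0 : ℝ) < N := by positivity
  have hτ : 0 < τ := div_pos hT hN₀
  have hNτ : (N : ℝ) * τ = T := mul_div_cancel₀ T hN₀.ne'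
  have hf : AffineOnCells f τ N := .of_eq_smul_add_smul hτ.ne' haff
  refine iSup₂_le fun h ⟨hh₀, hhT⟩ => ?_
  obtain ⟨i, hiN, hi⟩ := exists_mem_Ico_nat_mul hτ (⟨hh₀.le, hNτ ▸ hhT⟩ : h ∈ Ico 0 (N * τ))
  rw [← hNτ] at hcont ⊢
  calc _ ≤ ENNReal.ofReal (h ^ (-s)) * (discreteDiffNorm f τ N i p +
        ENNReal.ofReal ((h - i * τ) / τ) * (2 * discreteDiffNorm f τ N 1 p)) := by
        gcongr
        exact hf.eLpNorm_sub_le_discreteDiffNorm hτ hcont hp hiN hi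
    _ ≤ _ := ofReal_rpow_neg_mul_add_le (discreteDiffNorm_zero f τ N (one_pos.trans_le hp).ne')
        hτ hs.1.le hs.2.le (by omega) (by omega) hi

/-- Besov bound (`q = ∞`) for continuous piecewise affine functions: for `s ∈ (0,1)` and
`p ∈ [1,∞]`, `[f]_{B^s_{p,∞}} ≤ 3 max_{1 ≤ i < N} f_{i,p} / t_i^s`. -/
theorem piecewise_affine_besov_sup_bound {Y : Type*} [NormedAddCommGroup Y]
    [NormedSpace ℝ Y] [CompleteSpace Y] (T : ℝ) (hT : 0 < T) (N : ℕ) (hN : 2 ≤ N)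
    (f : ℝ → Y) (hcont : ContinuousOn f (Set.Icc 0 T))
    (haff : ∀ i : ℕ, 1 ≤ i → i ≤ N → ∀ t : ℝ,
      ((i : ℝ) - 1) * (T / N) ≤ t → t ≤ (i : ℝ) * (T / N) →
      f t = ((t - ((i : ℝ) - 1) * (T / N)) / (T / N)) • f ((i : ℝ) * (T / N)) +
        (((i : ℝ) * (T / N) - t) / (T / N)) • f (((i : ℝ) - 1) * (T / N)))
    (s : ℝ) (hs : s ∈ Set.Ioo (0 : ℝ) 1) (p : ℝ≥0∞) (hp : 1 ≤ p) :
    besovSeminormTop f T s p ≤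
      3 * (Finset.Icc 1 (N - 1)).sup
        (fun i => discreteDiffNorm f (T / N) N i p /
          ENNReal.ofReal (((i : ℝ) * (T / N)) ^ s)) :=
  piecewise_affine_besov_sup_bound_general T hT N hN f hcont haff s hs p hp
end
end
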